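/- arXiv:2504.02621 — 11 statements merged into one kernel-verified Lean document; each statement's English description precedes it below -/
import Mathlib

section
/- Let s₁,…,s₆ be positive real numbers with s₁+s₂+s₃+s₄+s₅+s₆ = π and s₁ ≤ s₃ ≤ s₅. Suppose there is a real number H such that cot A_t + cot B_t + cot C_t = H for every t = 1,…,6 (with A_t, B_t, C_t the cumulative half-arc sums defined in the context). Then s₁ = s₃ = s₅ and s₂ = s₄ = s₆; in particular cot A_t, cot B_t, cot C_t are independent of t (the hexagon cut out on the normal geodesic is a parallel hexagon). [Proposition 3.3 of the paper, which is the core of Theorem 1.1(i): a closed CMC Dupin hypersurface with g = 3 is isoparametric.] -/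
/-!
Write `x = s₁ + s₂ + s₃`, `y = s₃ + s₄ + s₅`, `z = s₅ + s₆ + s₁`. Since the arcs add up to `π`, each
`C_t` is `π - s_j` for an even `j`, so `cot C_t = -cot s_j` and the CMC equations become linear
relations among the values of the decreasing function `cot` at `s₁, …, s₆, x, y, z`. Their
differences, compared with `cot s₁ ≥ cot s₃ ≥ cot s₅`, give successively `s₆ ≤ s₄`, `s₂ ≤ s₆`,
`y ≤ z` and `z ≤ x`; the last two, i.e. `s₃ + s₄ ≤ s₆ + s₁` and `s₅ + s₆ ≤ s₂ + s₃`, force all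
these inequalities to be equalities.
-/

open Real Set

namespace Real

theorem cot_pi_sub (x : ℝ) : cot (π - x) = -cot x := by
  rw [cot_eq_cos_div_sin, cot_eq_cos_div_sin, sin_pi_sub, cos_pi_sub, neg_div]

theorem strictAntiOn_cot : StrictAntiOn cot (Ioo 0 π) := by
  intro a ha b hb hab
  rw [← tan_inv_eq_cot, ← tan_inv_eq_cot, ← tan_pi_div_two_sub, ← tan_pi_div_two_sub]
  exact strictMonoOn_tan ⟨by linarith [hb.2], by linarith [ha.1]⟩
    ⟨by linarith [ha.2], by linarith [ha.1]⟩ (by linarith)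

end Real

theorem parallel_hexagon_of_strictAntiOn {f : ℝ → ℝ} (hf : StrictAntiOn f (Ioo 0 π))
    {s₁ s₂ s₃ s₄ s₅ s₆ H : ℝ} (hs₁ : 0 < s₁) (hs₂ : 0 < s₂) (hs₄ : 0 < s₄) (hs₆ : 0 < s₆)
    (hsum : s₁ + s₂ + s₃ + s₄ + s₅ + s₆ = π)
    (h13 : s₁ ≤ s₃) (h35 : s₃ ≤ s₅)
    (h₁ : f s₁ + f (s₁ + s₂ + s₃) - f s₆ = H) (h₂ : f s₁ + f (s₅ + s₆ + s₁) - f s₂ = H)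
    (h₃ : f s₃ + f (s₃ + s₄ + s₅) - f s₂ = H) (h₄ : f s₃ + f (s₁ + s₂ + s₃) - f s₄ = H)
    (h₅ : f s₅ + f (s₅ + s₆ + s₁) - f s₄ = H) :
    s₁ = s₃ ∧ s₃ = s₅ ∧ s₂ = s₄ ∧ s₄ = s₆ := by
  have m₁ : s₁ ∈ Ioo 0 π := ⟨hs₁, by linarith⟩
  have m₂ : s₂ ∈ Ioo 0 π := ⟨hs₂, by linarith⟩
  have m₃ : s₃ ∈ Ioo 0 π := ⟨by linarith, by linarith⟩
  have m₄ : s₄ ∈ Ioo 0 π := ⟨hs₄, by linarith⟩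
  have m₅ : s₅ ∈ Ioo 0 π := ⟨by linarith, by linarith⟩
  have m₆ : s₆ ∈ Ioo 0 π := ⟨hs₆, by linarith⟩
  have mx : s₁ + s₂ + s₃ ∈ Ioo 0 π := ⟨by linarith, by linarith⟩
  have my : s₃ + s₄ + s₅ ∈ Ioo 0 π := ⟨by linarith, by linarith⟩
  have mz : s₅ + s₆ + s₁ ∈ Ioo 0 π := ⟨by linarith, by linarith⟩
  have f31 : f s₃ ≤ f s₁ := (hf.le_iff_ge m₃ m₁).2 h13
  have f53 : f s₅ ≤ f s₃ := (hf.le_iff_ge m₅ m₃).2 h35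
  have h64 : s₆ ≤ s₄ := (hf.le_iff_ge m₄ m₆).1 (by linarith)
  have h26 : s₂ ≤ s₆ := (hf.le_iff_ge m₆ m₂).1 (by linarith)
  have hyz : s₃ + s₄ + s₅ ≤ s₅ + s₆ + s₁ := (hf.le_iff_ge mz my).1 (by linarith)
  have hzx : s₅ + s₆ + s₁ ≤ s₁ + s₂ + s₃ := (hf.le_iff_ge mx mz).1 (by linarith)
  refine ⟨?_, ?_, ?_, ?_⟩ <;> linarith

theorem parallel_hexagon_general
    (s₁ s₂ s₃ s₄ s₅ s₆ H : ℝ)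
    (hs₁ : 0 < s₁) (hs₂ : 0 < s₂)
    (hs₄ : 0 < s₄) (hs₆ : 0 < s₆)
    (hsum : s₁ + s₂ + s₃ + s₄ + s₅ + s₆ = π)
    (h13 : s₁ ≤ s₃) (h35 : s₃ ≤ s₅)
    (hCMC₁ : Real.cot s₁ + Real.cot (s₁ + s₂ + s₃)
      + Real.cot (s₁ + s₂ + s₃ + s₄ + s₅) = H)
    (hCMC₂ : Real.cot s₁ + Real.cot (s₁ + s₆ + s₅)
      + Real.cot (s₁ + s₆ + s₅ + s₄ + s₃) = H)
    (hCMC₃ : Real.cot s₃ + Real.cot (s₃ + s₄ + s₅)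
      + Real.cot (s₃ + s₄ + s₅ + s₆ + s₁) = H)
    (hCMC₄ : Real.cot s₃ + Real.cot (s₃ + s₂ + s₁)
      + Real.cot (s₃ + s₂ + s₁ + s₆ + s₅) = H)
    (hCMC₅ : Real.cot s₅ + Real.cot (s₅ + s₆ + s₁)
      + Real.cot (s₅ + s₆ + s₁ + s₂ + s₃) = H) :
    s₁ = s₃ ∧ s₃ = s₅ ∧ s₂ = s₄ ∧ s₄ = s₆ := by
  rw [show s₁ + s₂ + s₃ + s₄ + s₅ = π - s₆ by linarith, cot_pi_sub, ← sub_eq_add_neg] at hCMC₁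
  rw [show s₁ + s₆ + s₅ + s₄ + s₃ = π - s₂ by linarith, cot_pi_sub, ← sub_eq_add_neg,
    show s₁ + s₆ + s₅ = s₅ + s₆ + s₁ by ring] at hCMC₂
  rw [show s₃ + s₄ + s₅ + s₆ + s₁ = π - s₂ by linarith, cot_pi_sub, ← sub_eq_add_neg] at hCMC₃
  rw [show s₃ + s₂ + s₁ + s₆ + s₅ = π - s₄ by linarith, cot_pi_sub, ← sub_eq_add_neg,
    show s₃ + s₂ + s₁ = s₁ + s₂ + s₃ by ring] at hCMC₄
  rw [show s₅ + s₆ + s₁ + s₂ + s₃ = π - s₄ by linarith, cot_pi_sub, ← sub_eq_add_neg] at hCMC₅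
  exact parallel_hexagon_of_strictAntiOn strictAntiOn_cot hs₁ hs₂ hs₄ hs₆ hsum h13 h35
    hCMC₁ hCMC₂ hCMC₃ hCMC₄ hCMC₅

/-- Proposition 3.3: the hexagon cut out on the normal geodesic by a closed CMC Dupin
hypersurface with `g = 3` is a parallel hexagon. -/
theorem parallel_hexagon
    (s₁ s₂ s₃ s₄ s₅ s₆ H : ℝ)
    (hs₁ : 0 < s₁) (hs₂ : 0 < s₂) (hs₃ : 0 < s₃)
    (hs₄ : 0 < s₄) (hs₅ : 0 < s₅) (hs₆ : 0 < s₆)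
    (hsum : s₁ + s₂ + s₃ + s₄ + s₅ + s₆ = π)
    (h13 : s₁ ≤ s₃) (h35 : s₃ ≤ s₅)
    (hCMC₁ : Real.cot s₁ + Real.cot (s₁ + s₂ + s₃)
      + Real.cot (s₁ + s₂ + s₃ + s₄ + s₅) = H)
    (hCMC₂ : Real.cot s₁ + Real.cot (s₁ + s₆ + s₅)
      + Real.cot (s₁ + s₆ + s₅ + s₄ + s₃) = H)
    (hCMC₃ : Real.cot s₃ + Real.cot (s₃ + s₄ + s₅)
      + Real.cot (s₃ + s₄ + s₅ + s₆ + s₁) = H)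
    (hCMC₄ : Real.cot s₃ + Real.cot (s₃ + s₂ + s₁)
      + Real.cot (s₃ + s₂ + s₁ + s₆ + s₅) = H)
    (hCMC₅ : Real.cot s₅ + Real.cot (s₅ + s₆ + s₁)
      + Real.cot (s₅ + s₆ + s₁ + s₂ + s₃) = H)
    (hCMC₆ : Real.cot s₅ + Real.cot (s₅ + s₄ + s₃)
      + Real.cot (s₅ + s₄ + s₃ + s₂ + s₁) = H) :
    s₁ = s₃ ∧ s₃ = s₅ ∧ s₂ = s₄ ∧ s₄ = s₆ :=
  parallel_hexagon_general s₁ s₂ s₃ s₄ s₅ s₆ H hs₁ hs₂ hs₄ hs₆ hsum h13 h35 hCMC₁ hCMC₂ hCMC₃ hCMC₄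
    hCMC₅
end

section
/- Let m₁, m₂ > 0 and let s₁,…,s₈ be positive real numbers with s₁+⋯+s₈ = π satisfying the CMC and CSC conditions of the context (for some constants H and S). Assume further s₁ ≤ s₃, s₁ ≤ s₅, s₁ ≤ s₇ (the largest principal curvature occurs at the first point) and s₂+s₃ ≤ s₇+s₈. Then s₁ = s₃ = s₅ = s₇ and s₂ = s₄ = s₆ = s₈; in particular each of cot A_t, cot B_t, cot C_t, cot D_t is independent of t and every sum of two consecutive half-arcs equals π/4 (the octagon cut out on the normal geodesic is a parallel octagon). [Proposition 4.7 of the paper, the core of Theorem 1.1(ii): a closed CMC Dupin hypersurface with g = 4 and constant scalar curvature is isoparametric.] -/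
open Real


private lemma cot_lt_cot_of_lt {x y : ℝ} (hx : 0 < x) (hy : y < π) (hxy : x < y) :
    Real.cot y < Real.cot x := by
  have hx2 : x < π := hxy.trans hy
  have hy0 : 0 < y := hx.trans hxy
  have hsx : 0 < Real.sin x := Real.sin_pos_of_pos_of_lt_pi hx hx2
  have hsy : 0 < Real.sin y := Real.sin_pos_of_pos_of_lt_pi hy0 hy
  have hs : 0 < Real.sin (y - x) :=
    Real.sin_pos_of_pos_of_lt_pi (by linarith) (by linarith)
  rw [Real.sin_sub] at hs
  rw [Real.cot_eq_cos_div_sin, Real.cot_eq_cos_div_sin, div_lt_div_iff₀ hsy hsx]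
  nlinarith [hs]

private lemma lt_of_cot_lt {x y : ℝ} (hx : 0 < x) (hxp : x < π) (hy : 0 < y) (hyp : y < π)
    (h : Real.cot x < Real.cot y) : y < x := by
  rcases lt_trichotomy y x with h1 | h1 | h1
  · exact h1
  · rw [h1] at h; exact absurd h (lt_irrefl _)
  · exact absurd h (not_lt.mpr (le_of_lt (cot_lt_cot_of_lt hx hyp h1)))

private lemma eq_of_cot_eq {x y : ℝ} (hx : 0 < x) (hxp : x < π) (hy : 0 < y) (hyp : y < π)
    (h : Real.cot x = Real.cot y) : x = y := by
  rcases lt_trichotomy x y with h1 | h1 | h1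
  · have := cot_lt_cot_of_lt hx hyp h1; linarith
  · exact h1
  · have := cot_lt_cot_of_lt hy hxp h1; linarith

private lemma key_strict {u v w x y z x' y' z' : ℝ} (hu : 0 < u) (hv : 0 < v) (hw : 0 < w)
    (o1 : y < x) (o2 : z < y) (o1' : y' < x') (o2' : z' < y')
    (hL : u*x + v*y + w*z = u*x' + v*y' + w*z')
    (hQ : u*x^2 + v*y^2 + w*z^2 = u*x'^2 + v*y'^2 + w*z'^2)
    (hxx : x' < x) : z' < z ∧ y < y' := by
  have I : u*(x-x')*((x+x') - (y+y')) = w*(z-z')*((y+y') - (z+z')) := by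
    linear_combination hQ - (y+y')*hL
  have c1 : 0 < (x+x') - (y+y') := by linarith
  have c2 : 0 < (y+y') - (z+z') := by linarith
  have h1 : 0 < u*(x-x')*((x+x') - (y+y')) := mul_pos (mul_pos hu (by linarith)) c1
  have hz : z' < z := by
    by_contra hc
    push_neg at hc
    have h5 : w*(z-z') ≤ 0 := mul_nonpos_of_nonneg_of_nonpos hw.le (by linarith)
    have h6 : w*(z-z')*((y+y') - (z+z')) ≤ 0 := mul_nonpos_of_nonpos_of_nonneg h5 c2.le
    rw [I] at h1
    linarith
  refine ⟨hz, ?_⟩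
  have h3 : v*(y'-y) = u*(x-x') + w*(z-z') := by linarith
  have h4 : 0 < v*(y'-y) := by
    have e1 := mul_pos hu (sub_pos.mpr hxx)
    have e2 := mul_pos hw (sub_pos.mpr hz)
    linarith
  by_contra hc
  push_neg at hc
  have : v*(y'-y) ≤ 0 := mul_nonpos_of_nonneg_of_nonpos hv.le (by linarith)
  linarith

private lemma key_eq {u v w x y z x' y' z' : ℝ} (hu : 0 < u) (hv : 0 < v) (hw : 0 < w)
    (o1 : y < x) (o2 : z < y) (o1' : y' < x') (o2' : z' < y')
    (hL : u*x + v*y + w*z = u*x' + v*y' + w*z')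
    (hQ : u*x^2 + v*y^2 + w*z^2 = u*x'^2 + v*y'^2 + w*z'^2)
    (hxx : x = x') : z = z' ∧ y = y' := by
  have I : u*(x-x')*((x+x') - (y+y')) = w*(z-z')*((y+y') - (z+z')) := by
    linear_combination hQ - (y+y')*hL
  have c2 : 0 < (y+y') - (z+z') := by linarith
  have I0 : w*(z-z')*((y+y') - (z+z')) = 0 := by rw [← I, hxx]; ring
  have hz : z = z' := by
    rcases mul_eq_zero.mp I0 with h | h
    · rcases mul_eq_zero.mp h with h' | h'
      · exact absurd h' (ne_of_gt hw)
      · linarith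
    · linarith
  have hy : y = y' := by
    have h5 : v*y = v*y' := by rw [hxx, hz] at hL; linarith
    exact mul_left_cancel₀ (ne_of_gt hv) h5
  exact ⟨hz, hy⟩

set_option maxHeartbeats 1000000 in
theorem parallel_octagon
    (m₁ m₂ H S : ℝ) (hm₁ : 0 < m₁) (hm₂ : 0 < m₂)
    (s₁ s₂ s₃ s₄ s₅ s₆ s₇ s₈ : ℝ)
    (hs₁ : 0 < s₁) (hs₂ : 0 < s₂) (hs₃ : 0 < s₃) (hs₄ : 0 < s₄)
    (hs₅ : 0 < s₅) (hs₆ : 0 < s₆) (hs₇ : 0 < s₇) (hs₈ : 0 < s₈)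
    (hsum : s₁ + s₂ + s₃ + s₄ + s₅ + s₆ + s₇ + s₈ = π)
    (hCMC1 : m₁ * (Real.cot (s₁) + Real.cot (s₁ + s₂ + s₃ + s₄ + s₅))
      + m₂ * (Real.cot (s₁ + s₂ + s₃) + Real.cot (s₁ + s₂ + s₃ + s₄ + s₅ + s₆ + s₇)) = H)
    (hCMC2 : m₁ * (Real.cot (s₁) + Real.cot (s₁ + s₈ + s₇ + s₆ + s₅))
      + m₂ * (Real.cot (s₁ + s₈ + s₇) + Real.cot (s₁ + s₈ + s₇ + s₆ + s₅ + s₄ + s₃)) = H)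
    (hCMC3 : m₁ * (Real.cot (s₃) + Real.cot (s₃ + s₄ + s₅ + s₆ + s₇))
      + m₂ * (Real.cot (s₃ + s₄ + s₅) + Real.cot (s₃ + s₄ + s₅ + s₆ + s₇ + s₈ + s₁)) = H)
    (hCMC4 : m₁ * (Real.cot (s₃) + Real.cot (s₃ + s₂ + s₁ + s₈ + s₇))
      + m₂ * (Real.cot (s₃ + s₂ + s₁) + Real.cot (s₃ + s₂ + s₁ + s₈ + s₇ + s₆ + s₅)) = H)
    (hCMC5 : m₁ * (Real.cot (s₅) + Real.cot (s₅ + s₆ + s₇ + s₈ + s₁))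
      + m₂ * (Real.cot (s₅ + s₆ + s₇) + Real.cot (s₅ + s₆ + s₇ + s₈ + s₁ + s₂ + s₃)) = H)
    (hCMC6 : m₁ * (Real.cot (s₅) + Real.cot (s₅ + s₄ + s₃ + s₂ + s₁))
      + m₂ * (Real.cot (s₅ + s₄ + s₃) + Real.cot (s₅ + s₄ + s₃ + s₂ + s₁ + s₈ + s₇)) = H)
    (hCMC7 : m₁ * (Real.cot (s₇) + Real.cot (s₇ + s₈ + s₁ + s₂ + s₃))
      + m₂ * (Real.cot (s₇ + s₈ + s₁) + Real.cot (s₇ + s₈ + s₁ + s₂ + s₃ + s₄ + s₅)) = H)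
    (hCMC8 : m₁ * (Real.cot (s₇) + Real.cot (s₇ + s₆ + s₅ + s₄ + s₃))
      + m₂ * (Real.cot (s₇ + s₆ + s₅) + Real.cot (s₇ + s₆ + s₅ + s₄ + s₃ + s₂ + s₁)) = H)
    (hCSC1 : m₁ * ((Real.cot (s₁))^2 + (Real.cot (s₁ + s₂ + s₃ + s₄ + s₅))^2)
      + m₂ * ((Real.cot (s₁ + s₂ + s₃))^2 + (Real.cot (s₁ + s₂ + s₃ + s₄ + s₅ + s₆ + s₇))^2) = S)
    (hCSC2 : m₁ * ((Real.cot (s₁))^2 + (Real.cot (s₁ + s₈ + s₇ + s₆ + s₅))^2)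
      + m₂ * ((Real.cot (s₁ + s₈ + s₇))^2 + (Real.cot (s₁ + s₈ + s₇ + s₆ + s₅ + s₄ + s₃))^2) = S)
    (hCSC3 : m₁ * ((Real.cot (s₃))^2 + (Real.cot (s₃ + s₄ + s₅ + s₆ + s₇))^2)
      + m₂ * ((Real.cot (s₃ + s₄ + s₅))^2 + (Real.cot (s₃ + s₄ + s₅ + s₆ + s₇ + s₈ + s₁))^2) = S)
    (hCSC4 : m₁ * ((Real.cot (s₃))^2 + (Real.cot (s₃ + s₂ + s₁ + s₈ + s₇))^2)
      + m₂ * ((Real.cot (s₃ + s₂ + s₁))^2 + (Real.cot (s₃ + s₂ + s₁ + s₈ + s₇ + s₆ + s₅))^2) = S)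
    (hCSC5 : m₁ * ((Real.cot (s₅))^2 + (Real.cot (s₅ + s₆ + s₇ + s₈ + s₁))^2)
      + m₂ * ((Real.cot (s₅ + s₆ + s₇))^2 + (Real.cot (s₅ + s₆ + s₇ + s₈ + s₁ + s₂ + s₃))^2) = S)
    (hCSC6 : m₁ * ((Real.cot (s₅))^2 + (Real.cot (s₅ + s₄ + s₃ + s₂ + s₁))^2)
      + m₂ * ((Real.cot (s₅ + s₄ + s₃))^2 + (Real.cot (s₅ + s₄ + s₃ + s₂ + s₁ + s₈ + s₇))^2) = S)
    (hCSC7 : m₁ * ((Real.cot (s₇))^2 + (Real.cot (s₇ + s₈ + s₁ + s₂ + s₃))^2)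
      + m₂ * ((Real.cot (s₇ + s₈ + s₁))^2 + (Real.cot (s₇ + s₈ + s₁ + s₂ + s₃ + s₄ + s₅))^2) = S)
    (hCSC8 : m₁ * ((Real.cot (s₇))^2 + (Real.cot (s₇ + s₆ + s₅ + s₄ + s₃))^2)
      + m₂ * ((Real.cot (s₇ + s₆ + s₅))^2 + (Real.cot (s₇ + s₆ + s₅ + s₄ + s₃ + s₂ + s₁))^2) = S)
    (h13 : s₁ ≤ s₃) (h15 : s₁ ≤ s₅) (h17 : s₁ ≤ s₇)
    (halpha : s₂ + s₃ ≤ s₇ + s₈) :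
    s₁ = s₃ ∧ s₃ = s₅ ∧ s₅ = s₇ ∧ s₂ = s₄ ∧ s₄ = s₆ ∧ s₆ = s₈ ∧ s₁ + s₂ = π/4 := by
  
  clear hCMC4 hCMC6 hCSC4 hCSC6
  -- rewrite arguments into canonical forms
  rw [show s₁ + s₂ + s₃ + s₄ + s₅ + s₆ + s₇ = π - s₈ from by linarith] at hCMC1 hCSC1
  rw [show s₁ + s₈ + s₇ + s₆ + s₅ + s₄ + s₃ = π - s₂ from by linarith,
      show s₁ + s₈ + s₇ + s₆ + s₅ = s₅ + s₆ + s₇ + s₈ + s₁ from by ring,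
      show s₁ + s₈ + s₇ = s₇ + s₈ + s₁ from by ring] at hCMC2 hCSC2
  rw [show s₃ + s₄ + s₅ + s₆ + s₇ + s₈ + s₁ = π - s₂ from by linarith] at hCMC3 hCSC3
  rw [show s₅ + s₆ + s₇ + s₈ + s₁ + s₂ + s₃ = π - s₄ from by linarith] at hCMC5 hCSC5
  rw [show s₇ + s₈ + s₁ + s₂ + s₃ + s₄ + s₅ = π - s₆ from by linarith] at hCMC7 hCSC7
  rw [show s₇ + s₆ + s₅ + s₄ + s₃ + s₂ + s₁ = π - s₈ from by linarith,
      show s₇ + s₆ + s₅ + s₄ + s₃ = s₃ + s₄ + s₅ + s₆ + s₇ from by ring,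
      show s₇ + s₆ + s₅ = s₅ + s₆ + s₇ from by ring] at hCMC8 hCSC8
  -- pair (2,7): shares cot (s₇+s₈+s₁)
  have hL27 : m₁ * Real.cot s₁ + m₁ * Real.cot (s₅+s₆+s₇+s₈+s₁) + m₂ * Real.cot (π - s₂)
      = m₁ * Real.cot s₇ + m₁ * Real.cot (s₇+s₈+s₁+s₂+s₃) + m₂ * Real.cot (π - s₆) := by
    linarith [hCMC2, hCMC7]
  have hQ27 : m₁ * (Real.cot s₁)^2 + m₁ * (Real.cot (s₅+s₆+s₇+s₈+s₁))^2
        + m₂ * (Real.cot (π - s₂))^2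
      = m₁ * (Real.cot s₇)^2 + m₁ * (Real.cot (s₇+s₈+s₁+s₂+s₃))^2
        + m₂ * (Real.cot (π - s₆))^2 := by
    linarith [hCSC2, hCSC7]
  have o27a : Real.cot (s₅+s₆+s₇+s₈+s₁) < Real.cot s₁ :=
    cot_lt_cot_of_lt hs₁ (by linarith) (by linarith)
  have o27b : Real.cot (π - s₂) < Real.cot (s₅+s₆+s₇+s₈+s₁) :=
    cot_lt_cot_of_lt (by linarith) (by linarith) (by linarith)
  have o27c : Real.cot (s₇+s₈+s₁+s₂+s₃) < Real.cot s₇ :=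
    cot_lt_cot_of_lt hs₇ (by linarith) (by linarith)
  have o27d : Real.cot (π - s₆) < Real.cot (s₇+s₈+s₁+s₂+s₃) :=
    cot_lt_cot_of_lt (by linarith) (by linarith) (by linarith)
  -- pair (1,8): shares cot (π - s₈)
  have hL18 : m₁ * Real.cot s₁ + m₂ * Real.cot (s₁+s₂+s₃) + m₁ * Real.cot (s₁+s₂+s₃+s₄+s₅)
      = m₁ * Real.cot s₇ + m₂ * Real.cot (s₅+s₆+s₇) + m₁ * Real.cot (s₃+s₄+s₅+s₆+s₇) := by
    linarith [hCMC1, hCMC8]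
  have hQ18 : m₁ * (Real.cot s₁)^2 + m₂ * (Real.cot (s₁+s₂+s₃))^2
        + m₁ * (Real.cot (s₁+s₂+s₃+s₄+s₅))^2
      = m₁ * (Real.cot s₇)^2 + m₂ * (Real.cot (s₅+s₆+s₇))^2
        + m₁ * (Real.cot (s₃+s₄+s₅+s₆+s₇))^2 := by
    linarith [hCSC1, hCSC8]
  have o18a : Real.cot (s₁+s₂+s₃) < Real.cot s₁ :=
    cot_lt_cot_of_lt hs₁ (by linarith) (by linarith)
  have o18b : Real.cot (s₁+s₂+s₃+s₄+s₅) < Real.cot (s₁+s₂+s₃) :=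
    cot_lt_cot_of_lt (by linarith) (by linarith) (by linarith)
  have o18c : Real.cot (s₅+s₆+s₇) < Real.cot s₇ :=
    cot_lt_cot_of_lt hs₇ (by linarith) (by linarith)
  have o18d : Real.cot (s₃+s₄+s₅+s₆+s₇) < Real.cot (s₅+s₆+s₇) :=
    cot_lt_cot_of_lt (by linarith) (by linarith) (by linarith)
  -- step 1 : s₁ = s₇
  have he17 : s₁ = s₇ := by
    rcases eq_or_lt_of_le h17 with h | hlt
    · exact h
    · exfalso
      have hxx : Real.cot s₇ < Real.cot s₁ := cot_lt_cot_of_lt hs₁ (by linarith) hlt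
      have r27 := key_strict hm₁ hm₁ hm₂ o27a o27b o27c o27d hL27 hQ27 hxx
      have r18 := key_strict hm₁ hm₂ hm₁ o18a o18b o18c o18d hL18 hQ18 hxx
      have t27 : s₇+s₈+s₁+s₂+s₃ < s₅+s₆+s₇+s₈+s₁ :=
        lt_of_cot_lt (by linarith) (by linarith) (by linarith) (by linarith) r27.2
      have t18 : s₅+s₆+s₇ < s₁+s₂+s₃ :=
        lt_of_cot_lt (by linarith) (by linarith) (by linarith) (by linarith) r18.2
      linarith
  -- equalities from pair (2,7)
  have e27 := key_eq hm₁ hm₁ hm₂ o27a o27b o27c o27d hL27 hQ27 (by rw [he17])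
  have he26 : s₂ = s₆ := by
    have := eq_of_cot_eq (by linarith) (by linarith) (by linarith) (by linarith) e27.1
    linarith
  have he35 : s₃ = s₅ := by
    have := eq_of_cot_eq (by linarith) (by linarith) (by linarith) (by linarith) e27.2
    linarith
  -- pair (2,3): shares cot (π - s₂)
  have hL23 : m₁ * Real.cot s₁ + m₂ * Real.cot (s₇+s₈+s₁) + m₁ * Real.cot (s₅+s₆+s₇+s₈+s₁)
      = m₁ * Real.cot s₃ + m₂ * Real.cot (s₃+s₄+s₅) + m₁ * Real.cot (s₃+s₄+s₅+s₆+s₇) := by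
    linarith [hCMC2, hCMC3]
  have hQ23 : m₁ * (Real.cot s₁)^2 + m₂ * (Real.cot (s₇+s₈+s₁))^2
        + m₁ * (Real.cot (s₅+s₆+s₇+s₈+s₁))^2
      = m₁ * (Real.cot s₃)^2 + m₂ * (Real.cot (s₃+s₄+s₅))^2
        + m₁ * (Real.cot (s₃+s₄+s₅+s₆+s₇))^2 := by
    linarith [hCSC2, hCSC3]
  have o23a : Real.cot (s₇+s₈+s₁) < Real.cot s₁ :=
    cot_lt_cot_of_lt hs₁ (by linarith) (by linarith)
  have o23b : Real.cot (s₅+s₆+s₇+s₈+s₁) < Real.cot (s₇+s₈+s₁) :=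
    cot_lt_cot_of_lt (by linarith) (by linarith) (by linarith)
  have o23c : Real.cot (s₃+s₄+s₅) < Real.cot s₃ :=
    cot_lt_cot_of_lt hs₃ (by linarith) (by linarith)
  have o23d : Real.cot (s₃+s₄+s₅+s₆+s₇) < Real.cot (s₃+s₄+s₅) :=
    cot_lt_cot_of_lt (by linarith) (by linarith) (by linarith)
  -- step 2 : s₁ = s₃
  have he13 : s₁ = s₃ := by
    rcases eq_or_lt_of_le h13 with h | hlt
    · exact h
    · exfalso
      have hxx : Real.cot s₃ < Real.cot s₁ := cot_lt_cot_of_lt hs₁ (by linarith) hlt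
      have r23 := key_strict hm₁ hm₂ hm₁ o23a o23b o23c o23d hL23 hQ23 hxx
      have t23z : s₅+s₆+s₇+s₈+s₁ < s₃+s₄+s₅+s₆+s₇ :=
        lt_of_cot_lt (by linarith) (by linarith) (by linarith) (by linarith) r23.1
      have t23y : s₃+s₄+s₅ < s₇+s₈+s₁ :=
        lt_of_cot_lt (by linarith) (by linarith) (by linarith) (by linarith) r23.2
      linarith
  have he57 : s₅ = s₇ := by linarith
  -- pair (5,8): shares cot (s₅+s₆+s₇)
  have hL58 : m₁ * Real.cot s₅ + m₁ * Real.cot (s₅+s₆+s₇+s₈+s₁) + m₂ * Real.cot (π - s₄)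
      = m₁ * Real.cot s₇ + m₁ * Real.cot (s₃+s₄+s₅+s₆+s₇) + m₂ * Real.cot (π - s₈) := by
    linarith [hCMC5, hCMC8]
  have hQ58 : m₁ * (Real.cot s₅)^2 + m₁ * (Real.cot (s₅+s₆+s₇+s₈+s₁))^2
        + m₂ * (Real.cot (π - s₄))^2
      = m₁ * (Real.cot s₇)^2 + m₁ * (Real.cot (s₃+s₄+s₅+s₆+s₇))^2
        + m₂ * (Real.cot (π - s₈))^2 := by
    linarith [hCSC5, hCSC8]
  have o58a : Real.cot (s₅+s₆+s₇+s₈+s₁) < Real.cot s₅ :=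
    cot_lt_cot_of_lt hs₅ (by linarith) (by linarith)
  have o58b : Real.cot (π - s₄) < Real.cot (s₅+s₆+s₇+s₈+s₁) :=
    cot_lt_cot_of_lt (by linarith) (by linarith) (by linarith)
  have o58c : Real.cot (s₃+s₄+s₅+s₆+s₇) < Real.cot s₇ :=
    cot_lt_cot_of_lt hs₇ (by linarith) (by linarith)
  have o58d : Real.cot (π - s₈) < Real.cot (s₃+s₄+s₅+s₆+s₇) :=
    cot_lt_cot_of_lt (by linarith) (by linarith) (by linarith)
  have e58 := key_eq hm₁ hm₁ hm₂ o58a o58b o58c o58d hL58 hQ58 (by rw [he57])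
  have he48 : s₄ = s₈ := by
    have := eq_of_cot_eq (by linarith) (by linarith) (by linarith) (by linarith) e58.1
    linarith
  -- pair (2,5): shares cot (s₅+s₆+s₇+s₈+s₁)
  have hL25 : m₁ * Real.cot s₁ + m₂ * Real.cot (s₇+s₈+s₁) + m₂ * Real.cot (π - s₂)
      = m₁ * Real.cot s₅ + m₂ * Real.cot (s₅+s₆+s₇) + m₂ * Real.cot (π - s₄) := by
    linarith [hCMC2, hCMC5]
  have hQ25 : m₁ * (Real.cot s₁)^2 + m₂ * (Real.cot (s₇+s₈+s₁))^2
        + m₂ * (Real.cot (π - s₂))^2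
      = m₁ * (Real.cot s₅)^2 + m₂ * (Real.cot (s₅+s₆+s₇))^2
        + m₂ * (Real.cot (π - s₄))^2 := by
    linarith [hCSC2, hCSC5]
  have o25b : Real.cot (π - s₂) < Real.cot (s₇+s₈+s₁) :=
    cot_lt_cot_of_lt (by linarith) (by linarith) (by linarith)
  have o25c : Real.cot (s₅+s₆+s₇) < Real.cot s₅ :=
    cot_lt_cot_of_lt hs₅ (by linarith) (by linarith)
  have o25d : Real.cot (π - s₄) < Real.cot (s₅+s₆+s₇) :=
    cot_lt_cot_of_lt (by linarith) (by linarith) (by linarith)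
  have he15 : s₁ = s₅ := by linarith
  have e25 := key_eq hm₁ hm₂ hm₂ o23a o25b o25c o25d hL25 hQ25 (by rw [he15])
  have he24 : s₂ = s₄ := by
    have := eq_of_cot_eq (by linarith) (by linarith) (by linarith) (by linarith) e25.1
    linarith
  exact ⟨he13, he35, he57, he24, by linarith, by linarith, by linarith⟩
end

section
/- Assume the hypotheses of the context (CMC, CSC and linking relations for λ^t > μ^t > ν^t > τ^t, t = 1,…,8, with m₁, m₂ > 0). If λ¹ = max{λ^t : t = 1,…,8} and μ¹ ≥ μ², then ν⁷ ≥ ν⁵ ≥ ν¹ ≥ ν³, τ¹ ≥ τ³, and τ⁷ ≥ τ⁵. [Lemma 4.4 of the paper.] -/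
/-- Key comparison lemma: if two triples `(x1,y1,z1)` and `(x2,y2,z2)` with
`xᵢ > yᵢ > zᵢ` satisfy the same linear and quadratic relations with positive
weights `p, q, r`, then `x1 ≥ x2` forces `y2 ≥ y1` and `z1 ≥ z2`, and
`y1 ≥ y2` forces `x2 ≥ x1` and `z2 ≥ z1`. -/
lemma key_cmp (p q r x1 y1 z1 x2 y2 z2 : ℝ)
    (hp : 0 < p) (hq : 0 < q) (hr : 0 < r)
    (o1 : x1 > y1) (o2 : y1 > z1) (o3 : x2 > y2) (o4 : y2 > z2)
    (lin : p * x1 + q * y1 + r * z1 = p * x2 + q * y2 + r * z2)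
    (quad : p * x1 ^ 2 + q * y1 ^ 2 + r * z1 ^ 2
          = p * x2 ^ 2 + q * y2 ^ 2 + r * z2 ^ 2) :
    (x1 ≥ x2 → y2 ≥ y1 ∧ z1 ≥ z2) ∧ (y1 ≥ y2 → x2 ≥ x1 ∧ z2 ≥ z1) := by
  have hPxz : (0:ℝ) < (x1 + x2) - (z1 + z2) := by linarith
  have hPyz : (0:ℝ) < (y1 + y2) - (z1 + z2) := by linarith
  have hPxy : (0:ℝ) < (x1 + x2) - (y1 + y2) := by linarith
  have i1 : p * (x1 - x2) * ((x1 + x2) - (z1 + z2))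
      = q * (y2 - y1) * ((y1 + y2) - (z1 + z2)) := by
    linear_combination quad - (z1 + z2) * lin
  have i2 : p * (x1 - x2) * ((x1 + x2) - (y1 + y2))
      = r * (z1 - z2) * ((y1 + y2) - (z1 + z2)) := by
    linear_combination quad - (y1 + y2) * lin
  constructor
  · intro hx
    have hy : y2 ≥ y1 := by nlinarith [mul_pos hq hPyz, mul_pos hp hPxz]
    have hz : z1 ≥ z2 := by nlinarith [mul_pos hr hPyz, mul_pos hp hPxy]
    exact ⟨hy, hz⟩
  · intro hy
    have hx : x2 ≥ x1 := by nlinarith [mul_pos hq hPyz, mul_pos hp hPxz]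
    have hz : z2 ≥ z1 := by nlinarith [mul_pos hr hPyz, mul_pos hp hPxy]
    exact ⟨hx, hz⟩

/-- Lemma 4.4: inequalities among the principal curvatures at the eight points
where a normal geodesic meets a closed CMC+CSC Dupin hypersurface with `g = 4`,
at a maximum point of the largest principal curvature.  Indices `0,…,7` stand
for the points `p¹,…,p⁸` of the paper. -/
theorem g4_max_point_ordering
    (m₁ m₂ H S : ℝ) (hm₁ : 0 < m₁) (hm₂ : 0 < m₂)
    (L M N T : Fin 8 → ℝ)
    (hord : ∀ t, L t > M t ∧ M t > N t ∧ N t > T t)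
    (hCMC : ∀ t, m₁ * (L t + N t) + m₂ * (M t + T t) = H)
    (hCSC : ∀ t, m₁ * ((L t) ^ 2 + (N t) ^ 2) + m₂ * ((M t) ^ 2 + (T t) ^ 2) = S)
    (hL : L 0 = L 1 ∧ L 2 = L 3 ∧ L 4 = L 5 ∧ L 6 = L 7)
    (hM : M 0 = M 3 ∧ M 1 = M 6 ∧ M 2 = M 5 ∧ M 4 = M 7)
    (hN : N 0 = N 5 ∧ N 1 = N 4 ∧ N 2 = N 7 ∧ N 3 = N 6)
    (hT : T 0 = T 7 ∧ T 1 = T 2 ∧ T 3 = T 4 ∧ T 5 = T 6)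
    (hmax : ∀ t, L t ≤ L 0)
    (hmu : M 0 ≥ M 1) :
    N 6 ≥ N 4 ∧ N 4 ≥ N 0 ∧ N 0 ≥ N 2 ∧ T 0 ≥ T 2 ∧ T 6 ≥ T 4 := by
  obtain ⟨hL01, hL23, hL45, hL67⟩ := hL
  obtain ⟨hM03, hM16, hM25, hM47⟩ := hM
  obtain ⟨hN05, hN14, hN27, hN36⟩ := hN
  obtain ⟨hT07, hT12, hT34, hT56⟩ := hT
  -- pair (0,1), sharing L:  M0 ≥ M1 ⇒ N1 ≥ N0 and T0 ≥ T1
  have p01 := key_cmp m₂ m₁ m₂ (M 0) (N 0) (T 0) (M 1) (N 1) (T 1) hm₂ hm₁ hm₂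
    (hord 0).2.1 (hord 0).2.2 (hord 1).2.1 (hord 1).2.2
    (by have a := hCMC 0; have b := hCMC 1; rw [hL01] at a; linarith)
    (by have a := hCSC 0; have b := hCSC 1; rw [hL01] at a; linarith)
  obtain ⟨hN10, hT01⟩ := p01.1 hmu
  -- pair (0,7), sharing T:  L0 ≥ L7 ⇒ M7 ≥ M0 and N0 ≥ N7
  have p07 := key_cmp m₁ m₂ m₁ (L 0) (M 0) (N 0) (L 7) (M 7) (N 7) hm₁ hm₂ hm₁
    (hord 0).1 (hord 0).2.1 (hord 7).1 (hord 7).2.1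
    (by have a := hCMC 0; have b := hCMC 7; rw [hT07] at a; linarith)
    (by have a := hCSC 0; have b := hCSC 7; rw [hT07] at a; linarith)
  obtain ⟨hM70, hN07⟩ := p07.1 (hmax 7)
  -- pair (1,6), sharing M:  L1 ≥ L6 ⇒ N6 ≥ N1 and T1 ≥ T6
  have p16 := key_cmp m₁ m₁ m₂ (L 1) (N 1) (T 1) (L 6) (N 6) (T 6) hm₁ hm₁ hm₂
    (by linarith [(hord 1).1, (hord 1).2.1]) (hord 1).2.2
    (by linarith [(hord 6).1, (hord 6).2.1]) (hord 6).2.2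
    (by have a := hCMC 1; have b := hCMC 6; rw [hM16] at a; linarith)
    (by have a := hCSC 1; have b := hCSC 6; rw [hM16] at a; linarith)
  obtain ⟨hN61, hT16⟩ := p16.1 (by rw [← hL01]; exact hmax 6)
  -- pair (3,6), sharing N:  M3 ≥ M6 ⇒ L6 ≥ L3 and T6 ≥ T3
  have p36 := key_cmp m₁ m₂ m₂ (L 3) (M 3) (T 3) (L 6) (M 6) (T 6) hm₁ hm₂ hm₂
    (hord 3).1 (by linarith [(hord 3).2.1, (hord 3).2.2])
    (hord 6).1 (by linarith [(hord 6).2.1, (hord 6).2.2])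
    (by have a := hCMC 3; have b := hCMC 6; rw [hN36] at a; linarith)
    (by have a := hCSC 3; have b := hCSC 6; rw [hN36] at a; linarith)
  obtain ⟨hL63, hT63⟩ := p36.2 (by rw [← hM03, ← hM16]; exact hmu)
  refine ⟨?_, ?_, ?_, ?_, ?_⟩
  · rw [← hN36, ← hN14]; linarith
  · rw [← hN14]; exact hN10
  · rw [hN27]; exact hN07
  · rw [← hT12]; exact hT01
  · rw [← hT34]; exact hT63
end

section
/- Assume the hypotheses of the context (CMC, CSC and linking relations for λ^t > μ^t > ν^t > τ^t, t = 1,…,8, with m₁, m₂ > 0). If λ¹ = min{λ^t : t = 1,…,8} and μ¹ ≤ μ², then ν⁷ ≤ ν⁵ ≤ ν¹ ≤ ν³, τ¹ ≤ τ³, and τ⁷ ≤ τ⁵. [Lemma 4.8 of the paper, the minimum-point analogue of Lemma 4.4.] -/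
/-- Sign lemma for two points sharing the `λ` value: the remaining values
`b > c > d` (weights `m₂, m₁, m₂`) satisfy: if `b ≤ b'` then `c' ≤ c` and `d ≤ d'`. -/
lemma g4_keyA (m₁ m₂ b c d b' c' d' : ℝ) (hm₁ : 0 < m₁) (hm₂ : 0 < m₂)
    (h1 : c < b) (h2 : d < c) (h1' : c' < b') (h2' : d' < c')
    (e1 : m₁ * (c - c') + m₂ * ((b - b') + (d - d')) = 0)
    (e2 : m₁ * (c ^ 2 - c' ^ 2) + m₂ * ((b ^ 2 - b' ^ 2) + (d ^ 2 - d' ^ 2)) = 0)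
    (hb : b ≤ b') : c' ≤ c ∧ d ≤ d' := by
  have I1 : m₁ * (c - c') * (c + c' - (d + d')) + m₂ * (b - b') * (b + b' - (d + d')) = 0 := by
    linear_combination e2 - (d + d') * e1
  have I2 : m₂ * (b - b') * (b + b' - (c + c')) + m₂ * (d - d') * (d + d' - (c + c')) = 0 := by
    linear_combination e2 - (c + c') * e1
  have B1 : 0 < c + c' - (d + d') := by linarith
  have B2 : 0 < b + b' - (d + d') := by linarith
  have B3 : 0 < b + b' - (c + c') := by linarith
  constructor
  · nlinarith [mul_nonneg (mul_nonneg hm₂.le (sub_nonneg.2 hb)) B2.le, mul_pos hm₁ B1]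
  · nlinarith [mul_nonneg (mul_nonneg hm₂.le (sub_nonneg.2 hb)) B3.le, mul_pos hm₂ B1]

/-- Sign lemma for two points sharing the `μ` value: remaining values
`a > c > d` with weights `m₁, m₁, m₂`. -/
lemma g4_keyB (m₁ m₂ a c d a' c' d' : ℝ) (hm₁ : 0 < m₁) (hm₂ : 0 < m₂)
    (h1 : c < a) (h2 : d < c) (h1' : c' < a') (h2' : d' < c')
    (e1 : m₁ * ((a - a') + (c - c')) + m₂ * (d - d') = 0)
    (e2 : m₁ * ((a ^ 2 - a' ^ 2) + (c ^ 2 - c' ^ 2)) + m₂ * (d ^ 2 - d' ^ 2) = 0)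
    (ha : a ≤ a') : c' ≤ c ∧ d ≤ d' := by
  have I1 : m₁ * (a - a') * (a + a' - (d + d')) + m₁ * (c - c') * (c + c' - (d + d')) = 0 := by
    linear_combination e2 - (d + d') * e1
  have I2 : m₁ * (a - a') * (a + a' - (c + c')) + m₂ * (d - d') * (d + d' - (c + c')) = 0 := by
    linear_combination e2 - (c + c') * e1
  have B1 : 0 < a + a' - (d + d') := by linarith
  have B2 : 0 < c + c' - (d + d') := by linarith
  have B3 : 0 < a + a' - (c + c') := by linarith
  constructor
  · nlinarith [mul_nonneg (mul_nonneg hm₁.le (sub_nonneg.2 ha)) B1.le, mul_pos hm₁ B2]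
  · nlinarith [mul_nonneg (mul_nonneg hm₁.le (sub_nonneg.2 ha)) B3.le, mul_pos hm₂ B2]

/-- Sign lemma for two points sharing the `τ` value: remaining values
`a > b > c` with weights `m₁, m₂, m₁`. -/
lemma g4_keyC (m₁ m₂ a b c a' b' c' : ℝ) (hm₁ : 0 < m₁) (hm₂ : 0 < m₂)
    (h1 : b < a) (h2 : c < b) (h1' : b' < a') (h2' : c' < b')
    (e1 : m₁ * ((a - a') + (c - c')) + m₂ * (b - b') = 0)
    (e2 : m₁ * ((a ^ 2 - a' ^ 2) + (c ^ 2 - c' ^ 2)) + m₂ * (b ^ 2 - b' ^ 2) = 0)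
    (ha : a ≤ a') : c ≤ c' := by
  have I1 : m₁ * (a - a') * (a + a' - (b + b')) + m₁ * (c - c') * (c + c' - (b + b')) = 0 := by
    linear_combination e2 - (b + b') * e1
  have B1 : 0 < a + a' - (b + b') := by linarith
  have B2 : 0 < b + b' - (c + c') := by linarith
  nlinarith [mul_nonneg (mul_nonneg hm₁.le (sub_nonneg.2 ha)) B1.le, mul_pos hm₁ B2]

/-- Sign lemma for two points sharing the `ν` value: remaining values
`a > b > d` with weights `m₁, m₂, m₂`. -/
lemma g4_keyD (m₁ m₂ a b d a' b' d' : ℝ) (hm₁ : 0 < m₁) (hm₂ : 0 < m₂)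
    (h1 : b < a) (h2 : d < b) (h1' : b' < a') (h2' : d' < b')
    (e1 : m₁ * (a - a') + m₂ * ((b - b') + (d - d')) = 0)
    (e2 : m₁ * (a ^ 2 - a' ^ 2) + m₂ * ((b ^ 2 - b' ^ 2) + (d ^ 2 - d' ^ 2)) = 0)
    (hb : b ≤ b') : d' ≤ d := by
  have I1 : m₁ * (a - a') * (a + a' - (d + d')) + m₂ * (b - b') * (b + b' - (d + d')) = 0 := by
    linear_combination e2 - (d + d') * e1
  have I2 : m₁ * (a - a') * (a + a' - (b + b')) + m₂ * (d - d') * (d + d' - (b + b')) = 0 := by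
    linear_combination e2 - (b + b') * e1
  have B1 : 0 < a + a' - (d + d') := by linarith
  have B2 : 0 < b + b' - (d + d') := by linarith
  have B3 : 0 < a + a' - (b + b') := by linarith
  have ha : 0 ≤ a - a' := by
    nlinarith [mul_nonneg (mul_nonneg hm₂.le (sub_nonneg.2 hb)) B2.le, mul_pos hm₁ B1]
  nlinarith [mul_nonneg (mul_nonneg hm₁.le ha) B3.le, mul_pos hm₂ B2]

/-- Lemma 4.8: the minimum-point analogue of Lemma 4.4 for a closed CMC+CSC
Dupin hypersurface with `g = 4`.  Indices `0,…,7` stand for the points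
`p¹,…,p⁸` of the paper. -/
theorem g4_min_point_ordering
    (m₁ m₂ H S : ℝ) (hm₁ : 0 < m₁) (hm₂ : 0 < m₂)
    (L M N T : Fin 8 → ℝ)
    (hord : ∀ t, L t > M t ∧ M t > N t ∧ N t > T t)
    (hCMC : ∀ t, m₁ * (L t + N t) + m₂ * (M t + T t) = H)
    (hCSC : ∀ t, m₁ * ((L t) ^ 2 + (N t) ^ 2) + m₂ * ((M t) ^ 2 + (T t) ^ 2) = S)
    (hL : L 0 = L 1 ∧ L 2 = L 3 ∧ L 4 = L 5 ∧ L 6 = L 7)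
    (hM : M 0 = M 3 ∧ M 1 = M 6 ∧ M 2 = M 5 ∧ M 4 = M 7)
    (hN : N 0 = N 5 ∧ N 1 = N 4 ∧ N 2 = N 7 ∧ N 3 = N 6)
    (hT : T 0 = T 7 ∧ T 1 = T 2 ∧ T 3 = T 4 ∧ T 5 = T 6)
    (hmin : ∀ t, L 0 ≤ L t)
    (hmu : M 0 ≤ M 1) :
    N 6 ≤ N 4 ∧ N 4 ≤ N 0 ∧ N 0 ≤ N 2 ∧ T 0 ≤ T 2 ∧ T 6 ≤ T 4 := by
  obtain ⟨o0a, o0b, o0c⟩ := hord 0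
  obtain ⟨o1a, o1b, o1c⟩ := hord 1
  obtain ⟨o3a, o3b, o3c⟩ := hord 3
  obtain ⟨o6a, o6b, o6c⟩ := hord 6
  obtain ⟨o7a, o7b, o7c⟩ := hord 7
  -- Pair (0,1): share L.  M 0 ≤ M 1 gives N 1 ≤ N 0, T 0 ≤ T 1.
  have e1A : m₁ * (N 0 - N 1) + m₂ * ((M 0 - M 1) + (T 0 - T 1)) = 0 := by
    linear_combination hCMC 0 - hCMC 1 - m₁ * hL.1
  have e2A : m₁ * (N 0 ^ 2 - N 1 ^ 2) + m₂ * ((M 0 ^ 2 - M 1 ^ 2) + (T 0 ^ 2 - T 1 ^ 2)) = 0 := by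
    linear_combination hCSC 0 - hCSC 1 - m₁ * (L 0 + L 1) * hL.1
  obtain ⟨hN10, hT01⟩ := g4_keyA m₁ m₂ (M 0) (N 0) (T 0) (M 1) (N 1) (T 1) hm₁ hm₂
    o0b o0c o1b o1c e1A e2A hmu
  -- Pair (1,6): share M.  L 1 = L 0 ≤ L 6 gives N 6 ≤ N 1.
  have e1B : m₁ * ((L 1 - L 6) + (N 1 - N 6)) + m₂ * (T 1 - T 6) = 0 := by
    linear_combination hCMC 1 - hCMC 6 - m₂ * hM.2.1
  have e2B : m₁ * ((L 1 ^ 2 - L 6 ^ 2) + (N 1 ^ 2 - N 6 ^ 2)) + m₂ * (T 1 ^ 2 - T 6 ^ 2) = 0 := by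
    linear_combination hCSC 1 - hCSC 6 - m₂ * (M 1 + M 6) * hM.2.1
  have hL16 : L 1 ≤ L 6 := hL.1 ▸ hmin 6
  obtain ⟨hN61, _⟩ := g4_keyB m₁ m₂ (L 1) (N 1) (T 1) (L 6) (N 6) (T 6) hm₁ hm₂
    (lt_trans o1b o1a) o1c (lt_trans o6b o6a) o6c e1B e2B hL16
  -- Pair (0,7): share T.  L 0 ≤ L 7 gives N 0 ≤ N 7.
  have e1C : m₁ * ((L 0 - L 7) + (N 0 - N 7)) + m₂ * (M 0 - M 7) = 0 := by
    linear_combination hCMC 0 - hCMC 7 - m₂ * hT.1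
  have e2C : m₁ * ((L 0 ^ 2 - L 7 ^ 2) + (N 0 ^ 2 - N 7 ^ 2)) + m₂ * (M 0 ^ 2 - M 7 ^ 2) = 0 := by
    linear_combination hCSC 0 - hCSC 7 - m₂ * (T 0 + T 7) * hT.1
  have hN07 : N 0 ≤ N 7 := g4_keyC m₁ m₂ (L 0) (M 0) (N 0) (L 7) (M 7) (N 7) hm₁ hm₂
    o0a o0b o7a o7b e1C e2C (hmin 7)
  -- Pair (3,6): share N.  M 3 = M 0 ≤ M 1 = M 6 gives T 6 ≤ T 3.
  have e1D : m₁ * (L 3 - L 6) + m₂ * ((M 3 - M 6) + (T 3 - T 6)) = 0 := by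
    linear_combination hCMC 3 - hCMC 6 - m₁ * hN.2.2.2
  have e2D : m₁ * (L 3 ^ 2 - L 6 ^ 2) + m₂ * ((M 3 ^ 2 - M 6 ^ 2) + (T 3 ^ 2 - T 6 ^ 2)) = 0 := by
    linear_combination hCSC 3 - hCSC 6 - m₁ * (N 3 + N 6) * hN.2.2.2
  have hM36 : M 3 ≤ M 6 := by rw [← hM.1, ← hM.2.1]; exact hmu
  have hT63 : T 6 ≤ T 3 := g4_keyD m₁ m₂ (L 3) (M 3) (T 3) (L 6) (M 6) (T 6) hm₁ hm₂
    o3a (lt_trans o3c o3b) o6a (lt_trans o6c o6b) e1D e2D hM36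
  refine ⟨?_, ?_, ?_, ?_, ?_⟩
  · rw [← hN.2.1]; exact hN61
  · rw [← hN.2.1]; exact hN10
  · rw [hN.2.2.1]; exact hN07
  · rw [← hT.2.1]; exact hT01
  · rw [← hT.2.2.1]; exact hT63
end

section
/- Let m₁, m₂ > 0 and let s₁,…,s₈ be positive real numbers with s₁+⋯+s₈ = π satisfying the CMC and CSC conditions of the context (for some constants H and S). Assume s₁ ≤ s₃, s₁ ≤ s₅, s₁ ≤ s₇ and s₂+s₃ ≤ s₇+s₈. Then s₂+s₃ = s₇+s₈, s₄ = s₆, s₆+s₇ = s₃+s₄, and s₈ = s₂ (in the paper's notation: α = a, β = b, γ = c, δ = d). [Proposition 4.5 of the paper.] -/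
open Real


private lemma cot_pi_sub' (x : ℝ) : Real.cot (π - x) = -Real.cot x := by
  rw [Real.cot_eq_cos_div_sin, Real.cot_eq_cos_div_sin, Real.cos_pi_sub, Real.sin_pi_sub]
  ring

private lemma cot_lt_cot' {x y : ℝ} (hx : 0 < x) (hxy : x < y) (hy : y < π) :
    Real.cot y < Real.cot x := by
  have h1 : Real.cot x = Real.tan (π/2 - x) := by
    rw [Real.tan_eq_sin_div_cos, Real.cot_eq_cos_div_sin, Real.sin_pi_div_two_sub,
      Real.cos_pi_div_two_sub]
  have h2 : Real.cot y = Real.tan (π/2 - y) := by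
    rw [Real.tan_eq_sin_div_cos, Real.cot_eq_cos_div_sin, Real.sin_pi_div_two_sub,
      Real.cos_pi_div_two_sub]
  rw [h1, h2]
  exact Real.strictMonoOn_tan (Set.mem_Ioo.mpr ⟨by linarith, by linarith⟩)
    (Set.mem_Ioo.mpr ⟨by linarith, by linarith⟩) (by linarith)

private lemma neg_cot_lt {c s : ℝ} (hc : 0 < c) (h : c + s < π) (hs : 0 < s) :
    -Real.cot s < Real.cot c := by
  have h2 := cot_lt_cot' hc (show c < π - s by linarith) (by linarith)
  rwa [cot_pi_sub'] at h2

private lemma cot_le_rev {u v : ℝ} (hu : 0 < u) (hv' : v < π) (h : Real.cot u ≤ Real.cot v) :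
    v ≤ u := by
  by_contra h'
  push_neg at h'
  exact absurd h (not_le.2 (cot_lt_cot' hu h' hv'))



private lemma keyA {w1 w2 w3 x1 x2 x3 y1 y2 y3 : ℝ}
    (hw1 : 0 < w1) (hw2 : 0 < w2) (hw3 : 0 < w3)
    (hy12 : y2 < y1) (hy23 : y3 < y2)
    (h1 : w1*x1 + w2*x2 + w3*x3 = w1*y1 + w2*y2 + w3*y3)
    (h2 : w1*x1^2 + w2*x2^2 + w3*x3^2 = w1*y1^2 + w2*y2^2 + w3*y3^2)
    (ha : y1 ≤ x1) (hb : x3 ≤ y3) :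
    x1 = y1 ∧ x2 = y2 ∧ x3 = y3 := by
  have h3 : w1*((x1-y2)^2-(y1-y2)^2) + w2*(x2-y2)^2 + w3*((x3-y2)^2-(y3-y2)^2) = 0 := by
    linear_combination h2 - (2*y2)*h1
  have t1 : 0 ≤ (x1-y2)^2-(y1-y2)^2 := by
    nlinarith [mul_nonneg (sub_nonneg.2 ha) (show (0:ℝ) ≤ x1 + y1 - 2*y2 by linarith)]
  have t3 : 0 ≤ (x3-y2)^2-(y3-y2)^2 := by
    nlinarith [mul_nonneg (sub_nonneg.2 hb) (show (0:ℝ) ≤ 2*y2 - x3 - y3 by linarith)]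
  have u1 : 0 ≤ w1*((x1-y2)^2-(y1-y2)^2) := mul_nonneg hw1.le t1
  have u3 : 0 ≤ w3*((x3-y2)^2-(y3-y2)^2) := mul_nonneg hw3.le t3
  have u2 : w2*(x2-y2)^2 = 0 :=
    le_antisymm (by linarith) (mul_nonneg hw2.le (sq_nonneg _))
  have e2 : x2 = y2 := by
    have hq : (x2-y2)^2 = 0 := (mul_eq_zero.mp u2).resolve_left (ne_of_gt hw2)
    have := (pow_eq_zero_iff two_ne_zero).mp hq
    linarith [this]
  have u1' : w1*((x1-y2)^2-(y1-y2)^2) = 0 := le_antisymm (by linarith) u1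
  have u3' : w3*((x3-y2)^2-(y3-y2)^2) = 0 := le_antisymm (by linarith) u3
  have A0 : (x1-y2)^2-(y1-y2)^2 = 0 :=
    (mul_eq_zero.mp u1').resolve_left (ne_of_gt hw1)
  have B0 : (x3-y2)^2-(y3-y2)^2 = 0 :=
    (mul_eq_zero.mp u3').resolve_left (ne_of_gt hw3)
  have e1 : x1 = y1 := by
    by_contra hne
    have hlt : y1 < x1 := lt_of_le_of_ne ha (Ne.symm hne)
    nlinarith [mul_pos (sub_pos.2 hlt) (show (0:ℝ) < x1 + y1 - 2*y2 by linarith)]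
  have e3 : x3 = y3 := by
    by_contra hne
    have hlt : x3 < y3 := lt_of_le_of_ne hb hne
    nlinarith [mul_pos (sub_pos.2 hlt) (show (0:ℝ) < 2*y2 - x3 - y3 by linarith)]
  exact ⟨e1, e2, e3⟩

private lemma couple {w1 w2 w3 x1 x2 x3 y1 y2 y3 : ℝ}
    (hw1 : 0 < w1) (hw2 : 0 < w2) (hw3 : 0 < w3)
    (hx12 : x2 < x1) (hx23 : x3 < x2) (hy12 : y2 < y1) (hy23 : y3 < y2)
    (h1 : w1*x1 + w2*x2 + w3*x3 = w1*y1 + w2*y2 + w3*y3)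
    (h2 : w1*x1^2 + w2*x2^2 + w3*x3^2 = w1*y1^2 + w2*y2^2 + w3*y3^2) :
    (y1 ≤ x1 ↔ y3 ≤ x3) ∧ (y1 ≤ x1 ↔ x2 ≤ y2) := by
  have Atb : y1 ≤ x1 → y3 ≤ x3 := by
    intro h
    rcases le_total y3 x3 with h' | h'
    · exact h'
    · exact (keyA hw1 hw2 hw3 hy12 hy23 h1 h2 h h').2.2.ge
  have Abt : y3 ≤ x3 → y1 ≤ x1 := by
    intro h
    rcases le_total y1 x1 with h' | h'
    · exact h'
    · exact (keyA hw1 hw2 hw3 hx12 hx23 h1.symm h2.symm h' h).1.le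
  have Atm : y1 ≤ x1 → x2 ≤ y2 := by
    intro h
    by_contra h'
    push_neg at h'
    have hb := Atb h
    nlinarith [mul_nonneg hw1.le (sub_nonneg.2 h), mul_pos hw2 (sub_pos.2 h'),
      mul_nonneg hw3.le (sub_nonneg.2 hb)]
  have Amt : x2 ≤ y2 → y1 ≤ x1 := by
    intro h
    rcases le_total y1 x1 with h' | h'
    · exact h'
    · have hb : x3 ≤ y3 := by
        rcases le_total x3 y3 with h'' | h''
        · exact h''
        · exact (keyA hw1 hw2 hw3 hx12 hx23 h1.symm h2.symm h' h'').2.2.ge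
      by_contra h''
      push_neg at h''
      nlinarith [mul_pos hw1 (sub_pos.2 h''), mul_nonneg hw2.le (sub_nonneg.2 h),
        mul_nonneg hw3.le (sub_nonneg.2 hb)]
  exact ⟨⟨Atb, Abt⟩, ⟨Atm, Amt⟩⟩

set_option maxHeartbeats 2000000 in
theorem angle_increments_eq
    (m₁ m₂ H S : ℝ) (hm₁ : 0 < m₁) (hm₂ : 0 < m₂)
    (s₁ s₂ s₃ s₄ s₅ s₆ s₇ s₈ : ℝ)
    (hs₁ : 0 < s₁) (hs₂ : 0 < s₂) (hs₃ : 0 < s₃) (hs₄ : 0 < s₄)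
    (hs₅ : 0 < s₅) (hs₆ : 0 < s₆) (hs₇ : 0 < s₇) (hs₈ : 0 < s₈)
    (hsum : s₁ + s₂ + s₃ + s₄ + s₅ + s₆ + s₇ + s₈ = π)
    (hCMC1 : m₁ * (Real.cot (s₁) + Real.cot (s₁ + s₂ + s₃ + s₄ + s₅))
      + m₂ * (Real.cot (s₁ + s₂ + s₃) + Real.cot (s₁ + s₂ + s₃ + s₄ + s₅ + s₆ + s₇)) = H)
    (hCMC2 : m₁ * (Real.cot (s₁) + Real.cot (s₁ + s₈ + s₇ + s₆ + s₅))
      + m₂ * (Real.cot (s₁ + s₈ + s₇) + Real.cot (s₁ + s₈ + s₇ + s₆ + s₅ + s₄ + s₃)) = H)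
    (hCMC3 : m₁ * (Real.cot (s₃) + Real.cot (s₃ + s₄ + s₅ + s₆ + s₇))
      + m₂ * (Real.cot (s₃ + s₄ + s₅) + Real.cot (s₃ + s₄ + s₅ + s₆ + s₇ + s₈ + s₁)) = H)
    (hCMC4 : m₁ * (Real.cot (s₃) + Real.cot (s₃ + s₂ + s₁ + s₈ + s₇))
      + m₂ * (Real.cot (s₃ + s₂ + s₁) + Real.cot (s₃ + s₂ + s₁ + s₈ + s₇ + s₆ + s₅)) = H)
    (hCMC5 : m₁ * (Real.cot (s₅) + Real.cot (s₅ + s₆ + s₇ + s₈ + s₁))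
      + m₂ * (Real.cot (s₅ + s₆ + s₇) + Real.cot (s₅ + s₆ + s₇ + s₈ + s₁ + s₂ + s₃)) = H)
    (hCMC6 : m₁ * (Real.cot (s₅) + Real.cot (s₅ + s₄ + s₃ + s₂ + s₁))
      + m₂ * (Real.cot (s₅ + s₄ + s₃) + Real.cot (s₅ + s₄ + s₃ + s₂ + s₁ + s₈ + s₇)) = H)
    (hCMC7 : m₁ * (Real.cot (s₇) + Real.cot (s₇ + s₈ + s₁ + s₂ + s₃))
      + m₂ * (Real.cot (s₇ + s₈ + s₁) + Real.cot (s₇ + s₈ + s₁ + s₂ + s₃ + s₄ + s₅)) = H)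
    (hCMC8 : m₁ * (Real.cot (s₇) + Real.cot (s₇ + s₆ + s₅ + s₄ + s₃))
      + m₂ * (Real.cot (s₇ + s₆ + s₅) + Real.cot (s₇ + s₆ + s₅ + s₄ + s₃ + s₂ + s₁)) = H)
    (hCSC1 : m₁ * ((Real.cot (s₁))^2 + (Real.cot (s₁ + s₂ + s₃ + s₄ + s₅))^2)
      + m₂ * ((Real.cot (s₁ + s₂ + s₃))^2 + (Real.cot (s₁ + s₂ + s₃ + s₄ + s₅ + s₆ + s₇))^2) = S)
    (hCSC2 : m₁ * ((Real.cot (s₁))^2 + (Real.cot (s₁ + s₈ + s₇ + s₆ + s₅))^2)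
      + m₂ * ((Real.cot (s₁ + s₈ + s₇))^2 + (Real.cot (s₁ + s₈ + s₇ + s₆ + s₅ + s₄ + s₃))^2) = S)
    (hCSC3 : m₁ * ((Real.cot (s₃))^2 + (Real.cot (s₃ + s₄ + s₅ + s₆ + s₇))^2)
      + m₂ * ((Real.cot (s₃ + s₄ + s₅))^2 + (Real.cot (s₃ + s₄ + s₅ + s₆ + s₇ + s₈ + s₁))^2) = S)
    (hCSC4 : m₁ * ((Real.cot (s₃))^2 + (Real.cot (s₃ + s₂ + s₁ + s₈ + s₇))^2)
      + m₂ * ((Real.cot (s₃ + s₂ + s₁))^2 + (Real.cot (s₃ + s₂ + s₁ + s₈ + s₇ + s₆ + s₅))^2) = S)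
    (hCSC5 : m₁ * ((Real.cot (s₅))^2 + (Real.cot (s₅ + s₆ + s₇ + s₈ + s₁))^2)
      + m₂ * ((Real.cot (s₅ + s₆ + s₇))^2 + (Real.cot (s₅ + s₆ + s₇ + s₈ + s₁ + s₂ + s₃))^2) = S)
    (hCSC6 : m₁ * ((Real.cot (s₅))^2 + (Real.cot (s₅ + s₄ + s₃ + s₂ + s₁))^2)
      + m₂ * ((Real.cot (s₅ + s₄ + s₃))^2 + (Real.cot (s₅ + s₄ + s₃ + s₂ + s₁ + s₈ + s₇))^2) = S)
    (hCSC7 : m₁ * ((Real.cot (s₇))^2 + (Real.cot (s₇ + s₈ + s₁ + s₂ + s₃))^2)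
      + m₂ * ((Real.cot (s₇ + s₈ + s₁))^2 + (Real.cot (s₇ + s₈ + s₁ + s₂ + s₃ + s₄ + s₅))^2) = S)
    (hCSC8 : m₁ * ((Real.cot (s₇))^2 + (Real.cot (s₇ + s₆ + s₅ + s₄ + s₃))^2)
      + m₂ * ((Real.cot (s₇ + s₆ + s₅))^2 + (Real.cot (s₇ + s₆ + s₅ + s₄ + s₃ + s₂ + s₁))^2) = S)
    (h13 : s₁ ≤ s₃) (h15 : s₁ ≤ s₅) (h17 : s₁ ≤ s₇)
    (halpha : s₂ + s₃ ≤ s₇ + s₈) :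
    s₂ + s₃ = s₇ + s₈ ∧ s₄ = s₆ ∧ s₆ + s₇ = s₃ + s₄ ∧ s₈ = s₂ := by
  -- Normalize the hypotheses: replace seven-term sums by π - sᵢ and put the
  -- arguments of cot in a canonical order.
  rw [show s₁ + s₂ + s₃ + s₄ + s₅ + s₆ + s₇ = π - s₈ from by linarith,
      cot_pi_sub'] at hCMC1 hCSC1
  rw [show s₁ + s₈ + s₇ + s₆ + s₅ + s₄ + s₃ = π - s₂ from by linarith,
      show s₁ + s₈ + s₇ + s₆ + s₅ = s₁ + s₅ + s₆ + s₇ + s₈ from by ring,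
      show s₁ + s₈ + s₇ = s₁ + s₇ + s₈ from by ring,
      cot_pi_sub'] at hCMC2 hCSC2
  rw [show s₃ + s₄ + s₅ + s₆ + s₇ + s₈ + s₁ = π - s₂ from by linarith,
      cot_pi_sub'] at hCMC3 hCSC3
  rw [show s₃ + s₂ + s₁ + s₈ + s₇ + s₆ + s₅ = π - s₄ from by linarith,
      show s₃ + s₂ + s₁ + s₈ + s₇ = s₁ + s₂ + s₃ + s₇ + s₈ from by ring,
      show s₃ + s₂ + s₁ = s₁ + s₂ + s₃ from by ring,
      cot_pi_sub'] at hCMC4 hCSC4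
  rw [show s₅ + s₄ + s₃ + s₂ + s₁ + s₈ + s₇ = π - s₆ from by linarith,
      show s₅ + s₄ + s₃ + s₂ + s₁ = s₁ + s₂ + s₃ + s₄ + s₅ from by ring,
      show s₅ + s₄ + s₃ = s₃ + s₄ + s₅ from by ring,
      cot_pi_sub'] at hCMC6 hCSC6
  rw [show s₇ + s₈ + s₁ + s₂ + s₃ + s₄ + s₅ = π - s₆ from by linarith,
      show s₇ + s₈ + s₁ + s₂ + s₃ = s₁ + s₂ + s₃ + s₇ + s₈ from by ring,
      show s₇ + s₈ + s₁ = s₁ + s₇ + s₈ from by ring,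
      cot_pi_sub'] at hCMC7 hCSC7
  rw [show s₇ + s₆ + s₅ + s₄ + s₃ + s₂ + s₁ = π - s₈ from by linarith,
      show s₇ + s₆ + s₅ + s₄ + s₃ = s₃ + s₄ + s₅ + s₆ + s₇ from by ring,
      show s₇ + s₆ + s₅ = s₅ + s₆ + s₇ from by ring,
      cot_pi_sub'] at hCMC8 hCSC8
  -- Pairwise moment equations (same first and second weighted moments).
  have P12h1 : m₂ * Real.cot (s₁ + s₂ + s₃) + m₁ * Real.cot (s₁ + s₂ + s₃ + s₄ + s₅)
      + m₂ * (-Real.cot s₈)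
      = m₂ * Real.cot (s₁ + s₇ + s₈) + m₁ * Real.cot (s₁ + s₅ + s₆ + s₇ + s₈)
      + m₂ * (-Real.cot s₂) := by linear_combination hCMC1 - hCMC2
  have P12h2 : m₂ * Real.cot (s₁ + s₂ + s₃) ^ 2 + m₁ * Real.cot (s₁ + s₂ + s₃ + s₄ + s₅) ^ 2
      + m₂ * (-Real.cot s₈) ^ 2
      = m₂ * Real.cot (s₁ + s₇ + s₈) ^ 2 + m₁ * Real.cot (s₁ + s₅ + s₆ + s₇ + s₈) ^ 2
      + m₂ * (-Real.cot s₂) ^ 2 := by linear_combination hCSC1 - hCSC2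
  have P27h1 : m₁ * Real.cot s₁ + m₁ * Real.cot (s₁ + s₅ + s₆ + s₇ + s₈)
      + m₂ * (-Real.cot s₂)
      = m₁ * Real.cot s₇ + m₁ * Real.cot (s₁ + s₂ + s₃ + s₇ + s₈)
      + m₂ * (-Real.cot s₆) := by linear_combination hCMC2 - hCMC7
  have P27h2 : m₁ * Real.cot s₁ ^ 2 + m₁ * Real.cot (s₁ + s₅ + s₆ + s₇ + s₈) ^ 2
      + m₂ * (-Real.cot s₂) ^ 2
      = m₁ * Real.cot s₇ ^ 2 + m₁ * Real.cot (s₁ + s₂ + s₃ + s₇ + s₈) ^ 2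
      + m₂ * (-Real.cot s₆) ^ 2 := by linear_combination hCSC2 - hCSC7
  have P36h1 : m₁ * Real.cot s₃ + m₁ * Real.cot (s₃ + s₄ + s₅ + s₆ + s₇)
      + m₂ * (-Real.cot s₂)
      = m₁ * Real.cot s₅ + m₁ * Real.cot (s₁ + s₂ + s₃ + s₄ + s₅)
      + m₂ * (-Real.cot s₆) := by linear_combination hCMC3 - hCMC6
  have P36h2 : m₁ * Real.cot s₃ ^ 2 + m₁ * Real.cot (s₃ + s₄ + s₅ + s₆ + s₇) ^ 2
      + m₂ * (-Real.cot s₂) ^ 2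
      = m₁ * Real.cot s₅ ^ 2 + m₁ * Real.cot (s₁ + s₂ + s₃ + s₄ + s₅) ^ 2
      + m₂ * (-Real.cot s₆) ^ 2 := by linear_combination hCSC3 - hCSC6
  have P18h1 : m₁ * Real.cot s₁ + m₂ * Real.cot (s₁ + s₂ + s₃)
      + m₁ * Real.cot (s₁ + s₂ + s₃ + s₄ + s₅)
      = m₁ * Real.cot s₇ + m₂ * Real.cot (s₅ + s₆ + s₇)
      + m₁ * Real.cot (s₃ + s₄ + s₅ + s₆ + s₇) := by linear_combination hCMC1 - hCMC8
  have P18h2 : m₁ * Real.cot s₁ ^ 2 + m₂ * Real.cot (s₁ + s₂ + s₃) ^ 2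
      + m₁ * Real.cot (s₁ + s₂ + s₃ + s₄ + s₅) ^ 2
      = m₁ * Real.cot s₇ ^ 2 + m₂ * Real.cot (s₅ + s₆ + s₇) ^ 2
      + m₁ * Real.cot (s₃ + s₄ + s₅ + s₆ + s₇) ^ 2 := by linear_combination hCSC1 - hCSC8
  have P34h1 : m₂ * Real.cot (s₃ + s₄ + s₅) + m₁ * Real.cot (s₃ + s₄ + s₅ + s₆ + s₇)
      + m₂ * (-Real.cot s₂)
      = m₂ * Real.cot (s₁ + s₂ + s₃) + m₁ * Real.cot (s₁ + s₂ + s₃ + s₇ + s₈)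
      + m₂ * (-Real.cot s₄) := by linear_combination hCMC3 - hCMC4
  have P34h2 : m₂ * Real.cot (s₃ + s₄ + s₅) ^ 2 + m₁ * Real.cot (s₃ + s₄ + s₅ + s₆ + s₇) ^ 2
      + m₂ * (-Real.cot s₂) ^ 2
      = m₂ * Real.cot (s₁ + s₂ + s₃) ^ 2 + m₁ * Real.cot (s₁ + s₂ + s₃ + s₇ + s₈) ^ 2
      + m₂ * (-Real.cot s₄) ^ 2 := by linear_combination hCSC3 - hCSC4
  -- Strict orderings between the cotangents appearing in each triple.
  have ob1c1 : Real.cot (s₁ + s₂ + s₃ + s₄ + s₅) < Real.cot (s₁ + s₂ + s₃) :=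
    cot_lt_cot' (by linarith) (by linarith) (by linarith)
  have oc1z8 : -Real.cot s₈ < Real.cot (s₁ + s₂ + s₃ + s₄ + s₅) :=
    neg_cot_lt (by linarith) (by linarith) hs₈
  have ob2c2 : Real.cot (s₁ + s₅ + s₆ + s₇ + s₈) < Real.cot (s₁ + s₇ + s₈) :=
    cot_lt_cot' (by linarith) (by linarith) (by linarith)
  have oc2z2 : -Real.cot s₂ < Real.cot (s₁ + s₅ + s₆ + s₇ + s₈) :=
    neg_cot_lt (by linarith) (by linarith) hs₂
  have oa1c2 : Real.cot (s₁ + s₅ + s₆ + s₇ + s₈) < Real.cot s₁ :=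
    cot_lt_cot' hs₁ (by linarith) (by linarith)
  have oa7c4 : Real.cot (s₁ + s₂ + s₃ + s₇ + s₈) < Real.cot s₇ :=
    cot_lt_cot' hs₇ (by linarith) (by linarith)
  have oc4z6 : -Real.cot s₆ < Real.cot (s₁ + s₂ + s₃ + s₇ + s₈) :=
    neg_cot_lt (by linarith) (by linarith) hs₆
  have oa3c3 : Real.cot (s₃ + s₄ + s₅ + s₆ + s₇) < Real.cot s₃ :=
    cot_lt_cot' hs₃ (by linarith) (by linarith)
  have oc3z2 : -Real.cot s₂ < Real.cot (s₃ + s₄ + s₅ + s₆ + s₇) :=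
    neg_cot_lt (by linarith) (by linarith) hs₂
  have oa5c1 : Real.cot (s₁ + s₂ + s₃ + s₄ + s₅) < Real.cot s₅ :=
    cot_lt_cot' hs₅ (by linarith) (by linarith)
  have oc1z6 : -Real.cot s₆ < Real.cot (s₁ + s₂ + s₃ + s₄ + s₅) :=
    neg_cot_lt (by linarith) (by linarith) hs₆
  have oa1b1 : Real.cot (s₁ + s₂ + s₃) < Real.cot s₁ :=
    cot_lt_cot' hs₁ (by linarith) (by linarith)
  have oa7b4 : Real.cot (s₅ + s₆ + s₇) < Real.cot s₇ :=
    cot_lt_cot' hs₇ (by linarith) (by linarith)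
  have ob4c3 : Real.cot (s₃ + s₄ + s₅ + s₆ + s₇) < Real.cot (s₅ + s₆ + s₇) :=
    cot_lt_cot' (by linarith) (by linarith) (by linarith)
  have ob3c3 : Real.cot (s₃ + s₄ + s₅ + s₆ + s₇) < Real.cot (s₃ + s₄ + s₅) :=
    cot_lt_cot' (by linarith) (by linarith) (by linarith)
  have ob1c4 : Real.cot (s₁ + s₂ + s₃ + s₇ + s₈) < Real.cot (s₁ + s₂ + s₃) :=
    cot_lt_cot' (by linarith) (by linarith) (by linarith)
  have oc4z4 : -Real.cot s₄ < Real.cot (s₁ + s₂ + s₃ + s₇ + s₈) :=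
    neg_cot_lt (by linarith) (by linarith) hs₄
  -- Hypothesis-level comparisons.
  have gp12 : Real.cot (s₁ + s₇ + s₈) ≤ Real.cot (s₁ + s₂ + s₃) := by
    rcases lt_or_eq_of_le (show s₁ + s₂ + s₃ ≤ s₁ + s₇ + s₈ by linarith) with h | h
    · exact (cot_lt_cot' (by linarith) h (by linarith)).le
    · rw [h]
  have ga17 : Real.cot s₇ ≤ Real.cot s₁ := by
    rcases lt_or_eq_of_le h17 with h | h
    · exact (cot_lt_cot' hs₁ h (by linarith)).le
    · rw [h]
  -- Coupling along the pairs of equations.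
  have C12 := couple hm₂ hm₁ hm₂ ob1c1 oc1z8 ob2c2 oc2z2 P12h1 P12h2
  have C12s := couple hm₂ hm₁ hm₂ ob2c2 oc2z2 ob1c1 oc1z8 P12h1.symm P12h2.symm
  have C27 := couple hm₁ hm₁ hm₂ oa1c2 oc2z2 oa7c4 oc4z6 P27h1 P27h2
  have C36 := couple hm₁ hm₁ hm₂ oa3c3 oc3z2 oa5c1 oc1z6 P36h1 P36h2
  have C36s := couple hm₁ hm₁ hm₂ oa5c1 oc1z6 oa3c3 oc3z2 P36h1.symm P36h2.symm
  have C18 := couple hm₁ hm₂ hm₁ oa1b1 ob1c1 oa7b4 ob4c3 P18h1 P18h2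
  have C18s := couple hm₁ hm₂ hm₁ oa7b4 ob4c3 oa1b1 ob1c1 P18h1.symm P18h2.symm
  have C34 := couple hm₂ hm₁ hm₂ ob3c3 oc3z2 ob1c4 oc4z4 P34h1 P34h2
  have st1a : -Real.cot s₂ ≤ -Real.cot s₈ := C12.1.mp gp12
  have st1b : Real.cot (s₁ + s₂ + s₃ + s₄ + s₅) ≤ Real.cot (s₁ + s₅ + s₆ + s₇ + s₈) :=
    C12.2.mp gp12
  have st2a : -Real.cot s₆ ≤ -Real.cot s₂ := C27.1.mp ga17
  have st2b : Real.cot (s₁ + s₅ + s₆ + s₇ + s₈) ≤ Real.cot (s₁ + s₂ + s₃ + s₇ + s₈) :=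
    C27.2.mp ga17
  have st3 : Real.cot s₅ ≤ Real.cot s₃ := C36.1.mpr st2a
  have st4a : Real.cot (s₃ + s₄ + s₅ + s₆ + s₇) ≤ Real.cot (s₁ + s₂ + s₃ + s₄ + s₅) :=
    C18.1.mp ga17
  have st4b : Real.cot (s₁ + s₂ + s₃) ≤ Real.cot (s₅ + s₆ + s₇) := C18.2.mp ga17
  -- Back to the angles.
  have A1 : s₅ + s₆ + s₇ ≤ s₁ + s₂ + s₃ := cot_le_rev (by linarith) (by linarith) st4b
  have A2 : s₁ + s₂ + s₃ + s₄ + s₅ ≤ s₃ + s₄ + s₅ + s₆ + s₇ :=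
    cot_le_rev (by linarith) (by linarith) st4a
  have A3 : s₃ ≤ s₅ := cot_le_rev hs₅ (by linarith) st3
  have e35 : s₃ = s₅ := le_antisymm A3 (by linarith)
  have ea35le : Real.cot s₃ ≤ Real.cot s₅ := le_of_eq (by rw [e35])
  have hz26 : -Real.cot s₂ ≤ -Real.cot s₆ := C36s.1.mp ea35le
  have hy13 : Real.cot (s₁ + s₂ + s₃ + s₄ + s₅) ≤ Real.cot (s₃ + s₄ + s₅ + s₆ + s₇) :=
    C36s.2.mp ea35le
  have e26 : s₂ = s₆ :=
    le_antisymm (cot_le_rev hs₆ (by linarith) (by linarith [hz26]))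
      (cot_le_rev hs₂ (by linarith) (by linarith [st2a]))
  have ha17b : Real.cot s₁ ≤ Real.cot s₇ := C18s.1.mpr hy13
  have e17 : s₁ = s₇ := le_antisymm h17 (cot_le_rev hs₁ (by linarith) ha17b)
  have mid34 : Real.cot (s₃ + s₄ + s₅ + s₆ + s₇) ≤ Real.cot (s₁ + s₂ + s₃ + s₇ + s₈) :=
    le_trans st4a (le_trans st1b st2b)
  have st9 : Real.cot (s₁ + s₂ + s₃) ≤ Real.cot (s₃ + s₄ + s₅) := C34.2.mpr mid34
  have A4 : s₃ + s₄ + s₅ ≤ s₁ + s₂ + s₃ := cot_le_rev (by linarith) (by linarith) st9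
  have A5 : s₁ + s₅ + s₆ + s₇ + s₈ ≤ s₁ + s₂ + s₃ + s₄ + s₅ :=
    cot_le_rev (by linarith) (by linarith) st1b
  have A6 : s₂ ≤ s₈ := cot_le_rev hs₈ (by linarith) (by linarith [st1a])
  have e28 : s₂ = s₈ := le_antisymm A6 (by linarith [A4, A5, e26, e17, e35])
  have eP : s₃ + s₄ = s₁ + s₂ := by linarith [A4, A5, e26, e17, e35, e28]
  have ez82 : -Real.cot s₈ ≤ -Real.cot s₂ := le_of_eq (by rw [e28])
  have hp12b : Real.cot (s₁ + s₂ + s₃) ≤ Real.cot (s₁ + s₇ + s₈) := C12s.1.mpr ez82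
  have B1 : s₁ + s₂ + s₃ ≤ s₁ + s₇ + s₈ := cot_le_rev (by linarith) (by linarith) gp12
  have B2 : s₁ + s₇ + s₈ ≤ s₁ + s₂ + s₃ := cot_le_rev (by linarith) (by linarith) hp12b
  exact ⟨by linarith, by linarith, by linarith, e28.symm⟩
end

section
/- Let m₁, m₂ > 0 and let s₁,…,s₈ be positive real numbers with s₁+⋯+s₈ = π satisfying the CMC and CSC conditions of the context (for some constants H and S). Assume s₁ ≤ s₃, s₁ ≤ s₅, s₁ ≤ s₇ and s₂+s₃ ≤ s₇+s₈. Then s₈+s₁ ≤ s₆+s₇ ≤ s₂+s₃ ≤ s₄+s₅ (in the paper's notation: δ ≤ γ ≤ α ≤ β). [Lemma 4.6 of the paper.] -/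
open Real

lemma cot_strict {x y : ℝ} (h0 : 0 < x) (hxy : x < y) (hy : y < π) :
    Real.cot y < Real.cot x := by
  have sx : 0 < Real.sin x := Real.sin_pos_of_pos_of_lt_pi h0 (hxy.trans hy)
  have sy : 0 < Real.sin y := Real.sin_pos_of_pos_of_lt_pi (h0.trans hxy) hy
  have hd : 0 < Real.sin (y - x) :=
    Real.sin_pos_of_pos_of_lt_pi (by linarith) (by linarith)
  rw [Real.sin_sub] at hd
  rw [Real.cot_eq_cos_div_sin, Real.cot_eq_cos_div_sin, div_lt_div_iff₀ sy sx]
  nlinarith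

lemma cot_le_cot {x y : ℝ} (h0 : 0 < x) (hxy : x ≤ y) (hy : y < π) :
    Real.cot y ≤ Real.cot x := by
  rcases eq_or_lt_of_le hxy with h | h
  · rw [h]
  · exact (cot_strict h0 h hy).le

lemma angle_le {x y : ℝ} (hx0 : 0 < x) (hxπ : x < π) (hy0 : 0 < y)
    (h : Real.cot y ≤ Real.cot x) : x ≤ y := by
  by_contra hc
  push_neg at hc
  exact absurd h (not_le.2 (cot_strict hy0 hc hxπ))

lemma mom_top (p q r x y z x' y' z' : ℝ) (hp : 0 < p) (hq : 0 < q) (hr : 0 < r)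
    (o1 : y < x) (o2 : z < y) (o1' : y' < x') (o2' : z' < y')
    (e1 : p*x + q*y + r*z = p*x' + q*y' + r*z')
    (e2 : p*x^2 + q*y^2 + r*z^2 = p*x'^2 + q*y'^2 + r*z'^2)
    (hs : x' ≤ x) : y ≤ y' ∧ z' ≤ z := by
  have hK : p*(x - x')*((x - y) + (x' - y')) = r*(z - z')*((y - z) + (y' - z')) := by
    linear_combination e2 - (y + y')*e1
  have hA : 0 < (x - y) + (x' - y') := by linarith
  have hB : 0 < (y - z) + (y' - z') := by linarith
  have hz : z' ≤ z := by
    by_contra hcon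
    push_neg at hcon
    have h1 : 0 ≤ p*(x - x')*((x - y) + (x' - y')) :=
      mul_nonneg (mul_nonneg hp.le (by linarith)) hA.le
    have h2 : r*(z - z')*((y - z) + (y' - z')) < 0 :=
      mul_neg_of_neg_of_pos (mul_neg_of_pos_of_neg hr (by linarith)) hB
    linarith
  refine ⟨?_, hz⟩
  have hpx : p*x' ≤ p*x := mul_le_mul_of_nonneg_left hs hp.le
  have hrz : r*z' ≤ r*z := mul_le_mul_of_nonneg_left hz hr.le
  have hqy : q*y ≤ q*y' := by linarith
  exact le_of_mul_le_mul_left hqy hq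

lemma mom_bot (p q r x y z x' y' z' : ℝ) (hp : 0 < p) (hq : 0 < q) (hr : 0 < r)
    (o1 : y < x) (o2 : z < y) (o1' : y' < x') (o2' : z' < y')
    (e1 : p*x + q*y + r*z = p*x' + q*y' + r*z')
    (e2 : p*x^2 + q*y^2 + r*z^2 = p*x'^2 + q*y'^2 + r*z'^2)
    (hs : z' ≤ z) : x' ≤ x ∧ y ≤ y' := by
  have hK : p*(x - x')*((x - y) + (x' - y')) = r*(z - z')*((y - z) + (y' - z')) := by
    linear_combination e2 - (y + y')*e1
  have hA : 0 < (x - y) + (x' - y') := by linarith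
  have hB : 0 < (y - z) + (y' - z') := by linarith
  have hx : x' ≤ x := by
    by_contra hcon
    push_neg at hcon
    have h1 : 0 ≤ r*(z - z')*((y - z) + (y' - z')) :=
      mul_nonneg (mul_nonneg hr.le (by linarith)) hB.le
    have h2 : p*(x - x')*((x - y) + (x' - y')) < 0 :=
      mul_neg_of_neg_of_pos (mul_neg_of_pos_of_neg hp (by linarith)) hA
    linarith
  refine ⟨hx, ?_⟩
  have hpx : p*x' ≤ p*x := mul_le_mul_of_nonneg_left hx hp.le
  have hrz : r*z' ≤ r*z := mul_le_mul_of_nonneg_left hs hr.le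
  have hqy : q*y ≤ q*y' := by linarith
  exact le_of_mul_le_mul_left hqy hq

lemma mom_mid (p q r x y z x' y' z' : ℝ) (hp : 0 < p) (hq : 0 < q) (hr : 0 < r)
    (o1 : y < x) (o2 : z < y) (o1' : y' < x') (o2' : z' < y')
    (e1 : p*x + q*y + r*z = p*x' + q*y' + r*z')
    (e2 : p*x^2 + q*y^2 + r*z^2 = p*x'^2 + q*y'^2 + r*z'^2)
    (hs : y ≤ y') : x' ≤ x ∧ z' ≤ z := by
  have hK : p*(x - x')*((x - y) + (x' - y')) = r*(z - z')*((y - z) + (y' - z')) := by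
    linear_combination e2 - (y + y')*e1
  have hA : 0 < (x - y) + (x' - y') := by linarith
  have hB : 0 < (y - z) + (y' - z') := by linarith
  have hx : x' ≤ x := by
    by_contra hcon
    push_neg at hcon
    -- then x - x' < 0, so LHS < 0, so z - z' < 0, so e1 forces y > y'
    have h2 : p*(x - x')*((x - y) + (x' - y')) < 0 :=
      mul_neg_of_neg_of_pos (mul_neg_of_pos_of_neg hp (by linarith)) hA
    have hz : z < z' := by
      by_contra hz'
      push_neg at hz'
      have : 0 ≤ r*(z - z')*((y - z) + (y' - z')) :=
        mul_nonneg (mul_nonneg hr.le (by linarith)) hB.le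
      linarith
    have hpx : p*x ≤ p*x' := mul_le_mul_of_nonneg_left hcon.le hp.le
    have hrz : r*z ≤ r*z' := mul_le_mul_of_nonneg_left hz.le hr.le
    have hqy : q*y' ≤ q*y := by linarith
    have : y' ≤ y := le_of_mul_le_mul_left hqy hq
    have hpx' : p*x < p*x' := by
      have := mul_lt_mul_of_pos_left hcon hp
      linarith
    have hrz' : r*z < r*z' := by
      have := mul_lt_mul_of_pos_left hz hr
      linarith
    have : q*y' < q*y := by linarith
    have hyy : y' < y := lt_of_mul_lt_mul_left this hq.le
    -- but hs : y ≤ y' contradiction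
    linarith
  exact ⟨hx, (mom_top p q r x y z x' y' z' hp hq hr o1 o2 o1' o2' e1 e2 hx).2⟩
open Real



set_option maxHeartbeats 2000000 in
theorem angle_increments_ordered
    (m₁ m₂ H S : ℝ) (hm₁ : 0 < m₁) (hm₂ : 0 < m₂)
    (s₁ s₂ s₃ s₄ s₅ s₆ s₇ s₈ : ℝ)
    (hs₁ : 0 < s₁) (hs₂ : 0 < s₂) (hs₃ : 0 < s₃) (hs₄ : 0 < s₄)
    (hs₅ : 0 < s₅) (hs₆ : 0 < s₆) (hs₇ : 0 < s₇) (hs₈ : 0 < s₈)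
    (hsum : s₁ + s₂ + s₃ + s₄ + s₅ + s₆ + s₇ + s₈ = π)
    (hCMC1 : m₁ * (Real.cot (s₁) + Real.cot (s₁ + s₂ + s₃ + s₄ + s₅))
      + m₂ * (Real.cot (s₁ + s₂ + s₃) + Real.cot (s₁ + s₂ + s₃ + s₄ + s₅ + s₆ + s₇)) = H)
    (hCMC2 : m₁ * (Real.cot (s₁) + Real.cot (s₁ + s₈ + s₇ + s₆ + s₅))
      + m₂ * (Real.cot (s₁ + s₈ + s₇) + Real.cot (s₁ + s₈ + s₇ + s₆ + s₅ + s₄ + s₃)) = H)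
    (hCMC3 : m₁ * (Real.cot (s₃) + Real.cot (s₃ + s₄ + s₅ + s₆ + s₇))
      + m₂ * (Real.cot (s₃ + s₄ + s₅) + Real.cot (s₃ + s₄ + s₅ + s₆ + s₇ + s₈ + s₁)) = H)
    (hCMC4 : m₁ * (Real.cot (s₃) + Real.cot (s₃ + s₂ + s₁ + s₈ + s₇))
      + m₂ * (Real.cot (s₃ + s₂ + s₁) + Real.cot (s₃ + s₂ + s₁ + s₈ + s₇ + s₆ + s₅)) = H)
    (hCMC5 : m₁ * (Real.cot (s₅) + Real.cot (s₅ + s₆ + s₇ + s₈ + s₁))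
      + m₂ * (Real.cot (s₅ + s₆ + s₇) + Real.cot (s₅ + s₆ + s₇ + s₈ + s₁ + s₂ + s₃)) = H)
    (hCMC6 : m₁ * (Real.cot (s₅) + Real.cot (s₅ + s₄ + s₃ + s₂ + s₁))
      + m₂ * (Real.cot (s₅ + s₄ + s₃) + Real.cot (s₅ + s₄ + s₃ + s₂ + s₁ + s₈ + s₇)) = H)
    (hCMC7 : m₁ * (Real.cot (s₇) + Real.cot (s₇ + s₈ + s₁ + s₂ + s₃))
      + m₂ * (Real.cot (s₇ + s₈ + s₁) + Real.cot (s₇ + s₈ + s₁ + s₂ + s₃ + s₄ + s₅)) = H)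
    (hCMC8 : m₁ * (Real.cot (s₇) + Real.cot (s₇ + s₆ + s₅ + s₄ + s₃))
      + m₂ * (Real.cot (s₇ + s₆ + s₅) + Real.cot (s₇ + s₆ + s₅ + s₄ + s₃ + s₂ + s₁)) = H)
    (hCSC1 : m₁ * ((Real.cot (s₁))^2 + (Real.cot (s₁ + s₂ + s₃ + s₄ + s₅))^2)
      + m₂ * ((Real.cot (s₁ + s₂ + s₃))^2 + (Real.cot (s₁ + s₂ + s₃ + s₄ + s₅ + s₆ + s₇))^2) = S)
    (hCSC2 : m₁ * ((Real.cot (s₁))^2 + (Real.cot (s₁ + s₈ + s₇ + s₆ + s₅))^2)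
      + m₂ * ((Real.cot (s₁ + s₈ + s₇))^2 + (Real.cot (s₁ + s₈ + s₇ + s₆ + s₅ + s₄ + s₃))^2) = S)
    (hCSC3 : m₁ * ((Real.cot (s₃))^2 + (Real.cot (s₃ + s₄ + s₅ + s₆ + s₇))^2)
      + m₂ * ((Real.cot (s₃ + s₄ + s₅))^2 + (Real.cot (s₃ + s₄ + s₅ + s₆ + s₇ + s₈ + s₁))^2) = S)
    (hCSC4 : m₁ * ((Real.cot (s₃))^2 + (Real.cot (s₃ + s₂ + s₁ + s₈ + s₇))^2)
      + m₂ * ((Real.cot (s₃ + s₂ + s₁))^2 + (Real.cot (s₃ + s₂ + s₁ + s₈ + s₇ + s₆ + s₅))^2) = S)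
    (hCSC5 : m₁ * ((Real.cot (s₅))^2 + (Real.cot (s₅ + s₆ + s₇ + s₈ + s₁))^2)
      + m₂ * ((Real.cot (s₅ + s₆ + s₇))^2 + (Real.cot (s₅ + s₆ + s₇ + s₈ + s₁ + s₂ + s₃))^2) = S)
    (hCSC6 : m₁ * ((Real.cot (s₅))^2 + (Real.cot (s₅ + s₄ + s₃ + s₂ + s₁))^2)
      + m₂ * ((Real.cot (s₅ + s₄ + s₃))^2 + (Real.cot (s₅ + s₄ + s₃ + s₂ + s₁ + s₈ + s₇))^2) = S)
    (hCSC7 : m₁ * ((Real.cot (s₇))^2 + (Real.cot (s₇ + s₈ + s₁ + s₂ + s₃))^2)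
      + m₂ * ((Real.cot (s₇ + s₈ + s₁))^2 + (Real.cot (s₇ + s₈ + s₁ + s₂ + s₃ + s₄ + s₅))^2) = S)
    (hCSC8 : m₁ * ((Real.cot (s₇))^2 + (Real.cot (s₇ + s₆ + s₅ + s₄ + s₃))^2)
      + m₂ * ((Real.cot (s₇ + s₆ + s₅))^2 + (Real.cot (s₇ + s₆ + s₅ + s₄ + s₃ + s₂ + s₁))^2) = S)
    (h13 : s₁ ≤ s₃) (h15 : s₁ ≤ s₅) (h17 : s₁ ≤ s₇)
    (halpha : s₂ + s₃ ≤ s₇ + s₈) :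
    s₈ + s₁ ≤ s₆ + s₇ ∧ s₆ + s₇ ≤ s₂ + s₃ ∧ s₂ + s₃ ≤ s₄ + s₅ := by
  -- strict cot orderings within each equation
  have o1ab : Real.cot (s₁ + s₂ + s₃) < Real.cot s₁ :=
    cot_strict hs₁ (by linarith) (by linarith)
  have o1bc : Real.cot (s₁ + s₂ + s₃ + s₄ + s₅) < Real.cot (s₁ + s₂ + s₃) :=
    cot_strict (by linarith) (by linarith) (by linarith)
  have o1cd : Real.cot (s₁ + s₂ + s₃ + s₄ + s₅ + s₆ + s₇) < Real.cot (s₁ + s₂ + s₃ + s₄ + s₅) :=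
    cot_strict (by linarith) (by linarith) (by linarith)
  have o2ab : Real.cot (s₁ + s₈ + s₇) < Real.cot s₁ :=
    cot_strict hs₁ (by linarith) (by linarith)
  have o2bc : Real.cot (s₁ + s₈ + s₇ + s₆ + s₅) < Real.cot (s₁ + s₈ + s₇) :=
    cot_strict (by linarith) (by linarith) (by linarith)
  have o2cd : Real.cot (s₁ + s₈ + s₇ + s₆ + s₅ + s₄ + s₃) < Real.cot (s₁ + s₈ + s₇ + s₆ + s₅) :=
    cot_strict (by linarith) (by linarith) (by linarith)
  have o4ab : Real.cot (s₃ + s₂ + s₁) < Real.cot s₃ :=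
    cot_strict hs₃ (by linarith) (by linarith)
  have o4bc : Real.cot (s₃ + s₂ + s₁ + s₈ + s₇) < Real.cot (s₃ + s₂ + s₁) :=
    cot_strict (by linarith) (by linarith) (by linarith)
  have o4cd : Real.cot (s₃ + s₂ + s₁ + s₈ + s₇ + s₆ + s₅) < Real.cot (s₃ + s₂ + s₁ + s₈ + s₇) :=
    cot_strict (by linarith) (by linarith) (by linarith)
  have o5ab : Real.cot (s₅ + s₆ + s₇) < Real.cot s₅ :=
    cot_strict hs₅ (by linarith) (by linarith)
  have o5bc : Real.cot (s₅ + s₆ + s₇ + s₈ + s₁) < Real.cot (s₅ + s₆ + s₇) :=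
    cot_strict (by linarith) (by linarith) (by linarith)
  have o5cd : Real.cot (s₅ + s₆ + s₇ + s₈ + s₁ + s₂ + s₃) < Real.cot (s₅ + s₆ + s₇ + s₈ + s₁) :=
    cot_strict (by linarith) (by linarith) (by linarith)
  have o6ab : Real.cot (s₅ + s₄ + s₃) < Real.cot s₅ :=
    cot_strict hs₅ (by linarith) (by linarith)
  have o6bc : Real.cot (s₅ + s₄ + s₃ + s₂ + s₁) < Real.cot (s₅ + s₄ + s₃) :=
    cot_strict (by linarith) (by linarith) (by linarith)
  have o6cd : Real.cot (s₅ + s₄ + s₃ + s₂ + s₁ + s₈ + s₇) < Real.cot (s₅ + s₄ + s₃ + s₂ + s₁) :=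
    cot_strict (by linarith) (by linarith) (by linarith)
  have o7ab : Real.cot (s₇ + s₈ + s₁) < Real.cot s₇ :=
    cot_strict hs₇ (by linarith) (by linarith)
  have o7bc : Real.cot (s₇ + s₈ + s₁ + s₂ + s₃) < Real.cot (s₇ + s₈ + s₁) :=
    cot_strict (by linarith) (by linarith) (by linarith)
  have o7cd : Real.cot (s₇ + s₈ + s₁ + s₂ + s₃ + s₄ + s₅) < Real.cot (s₇ + s₈ + s₁ + s₂ + s₃) :=
    cot_strict (by linarith) (by linarith) (by linarith)
  have o8ab : Real.cot (s₇ + s₆ + s₅) < Real.cot s₇ :=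
    cot_strict hs₇ (by linarith) (by linarith)
  have o8bc : Real.cot (s₇ + s₆ + s₅ + s₄ + s₃) < Real.cot (s₇ + s₆ + s₅) :=
    cot_strict (by linarith) (by linarith) (by linarith)
  have o8cd : Real.cot (s₇ + s₆ + s₅ + s₄ + s₃ + s₂ + s₁) < Real.cot (s₇ + s₆ + s₅ + s₄ + s₃) :=
    cot_strict (by linarith) (by linarith) (by linarith)
  -- Step 1 : A-pair (E1,E2), seed α ≤ a
  have e1_12 : m₂ * Real.cot (s₁ + s₂ + s₃) + m₁ * Real.cot (s₁ + s₂ + s₃ + s₄ + s₅)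
      + m₂ * Real.cot (s₁ + s₂ + s₃ + s₄ + s₅ + s₆ + s₇)
      = m₂ * Real.cot (s₁ + s₈ + s₇) + m₁ * Real.cot (s₁ + s₈ + s₇ + s₆ + s₅)
      + m₂ * Real.cot (s₁ + s₈ + s₇ + s₆ + s₅ + s₄ + s₃) := by
    linear_combination hCMC1 - hCMC2
  have e2_12 : m₂ * (Real.cot (s₁ + s₂ + s₃))^2 + m₁ * (Real.cot (s₁ + s₂ + s₃ + s₄ + s₅))^2
      + m₂ * (Real.cot (s₁ + s₂ + s₃ + s₄ + s₅ + s₆ + s₇))^2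
      = m₂ * (Real.cot (s₁ + s₈ + s₇))^2 + m₁ * (Real.cot (s₁ + s₈ + s₇ + s₆ + s₅))^2
      + m₂ * (Real.cot (s₁ + s₈ + s₇ + s₆ + s₅ + s₄ + s₃))^2 := by
    linear_combination hCSC1 - hCSC2
  have sd12 : Real.cot (s₁ + s₈ + s₇) ≤ Real.cot (s₁ + s₂ + s₃) :=
    cot_le_cot (by linarith) (by linarith) (by linarith)
  obtain ⟨hy12, hz12⟩ := mom_top m₂ m₁ m₂ _ _ _ _ _ _ hm₂ hm₁ hm₂
    o1bc o1cd o2bc o2cd e1_12 e2_12 sd12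
  have F1 : s₆ + s₇ + s₈ ≤ s₂ + s₃ + s₄ := by
    have := angle_le (x := s₁ + s₈ + s₇ + s₆ + s₅) (y := s₁ + s₂ + s₃ + s₄ + s₅)
      (by linarith) (by linarith) (by linarith) hy12
    linarith
  have F2 : s₂ ≤ s₈ := by
    have := angle_le (x := s₁ + s₂ + s₃ + s₄ + s₅ + s₆ + s₇)
      (y := s₁ + s₈ + s₇ + s₆ + s₅ + s₄ + s₃)
      (by linarith) (by linarith) (by linarith) hz12
    linarith
  -- Step 2 : B-pair (E1,E4), seed s₁ ≤ s₃
  have hB14 : Real.cot (s₃ + s₂ + s₁) = Real.cot (s₁ + s₂ + s₃) :=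
    congrArg Real.cot (by ring)
  have e1_14 : m₁ * Real.cot s₁ + m₁ * Real.cot (s₁ + s₂ + s₃ + s₄ + s₅)
      + m₂ * Real.cot (s₁ + s₂ + s₃ + s₄ + s₅ + s₆ + s₇)
      = m₁ * Real.cot s₃ + m₁ * Real.cot (s₃ + s₂ + s₁ + s₈ + s₇)
      + m₂ * Real.cot (s₃ + s₂ + s₁ + s₈ + s₇ + s₆ + s₅) := by
    linear_combination hCMC1 - hCMC4 + m₂ * hB14
  have e2_14 : m₁ * (Real.cot s₁)^2 + m₁ * (Real.cot (s₁ + s₂ + s₃ + s₄ + s₅))^2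
      + m₂ * (Real.cot (s₁ + s₂ + s₃ + s₄ + s₅ + s₆ + s₇))^2
      = m₁ * (Real.cot s₃)^2 + m₁ * (Real.cot (s₃ + s₂ + s₁ + s₈ + s₇))^2
      + m₂ * (Real.cot (s₃ + s₂ + s₁ + s₈ + s₇ + s₆ + s₅))^2 := by
    linear_combination hCSC1 - hCSC4
      + m₂ * (Real.cot (s₃ + s₂ + s₁) + Real.cot (s₁ + s₂ + s₃)) * hB14
  have o1ac := o1bc.trans o1ab
  have o4ac := o4bc.trans o4ab
  have sd14 : Real.cot s₃ ≤ Real.cot s₁ := cot_le_cot hs₁ h13 (by linarith)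
  obtain ⟨hy14, hz14⟩ := mom_top m₁ m₁ m₂ _ _ _ _ _ _ hm₁ hm₁ hm₂
    o1ac o1cd o4ac o4cd e1_14 e2_14 sd14
  have F3 : s₇ + s₈ ≤ s₄ + s₅ := by
    have := angle_le (x := s₃ + s₂ + s₁ + s₈ + s₇) (y := s₁ + s₂ + s₃ + s₄ + s₅)
      (by linarith) (by linarith) (by linarith) hy14
    linarith
  have F4 : s₄ ≤ s₈ := by
    have := angle_le (x := s₁ + s₂ + s₃ + s₄ + s₅ + s₆ + s₇)
      (y := s₃ + s₂ + s₁ + s₈ + s₇ + s₆ + s₅)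
      (by linarith) (by linarith) (by linarith) hz14
    linarith
  -- Step 3 : C-pair (E1,E6), seed s₁ ≤ s₅
  have hC16 : Real.cot (s₅ + s₄ + s₃ + s₂ + s₁) = Real.cot (s₁ + s₂ + s₃ + s₄ + s₅) :=
    congrArg Real.cot (by ring)
  have e1_16 : m₁ * Real.cot s₁ + m₂ * Real.cot (s₁ + s₂ + s₃)
      + m₂ * Real.cot (s₁ + s₂ + s₃ + s₄ + s₅ + s₆ + s₇)
      = m₁ * Real.cot s₅ + m₂ * Real.cot (s₅ + s₄ + s₃)
      + m₂ * Real.cot (s₅ + s₄ + s₃ + s₂ + s₁ + s₈ + s₇) := by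
    linear_combination hCMC1 - hCMC6 + m₁ * hC16
  have e2_16 : m₁ * (Real.cot s₁)^2 + m₂ * (Real.cot (s₁ + s₂ + s₃))^2
      + m₂ * (Real.cot (s₁ + s₂ + s₃ + s₄ + s₅ + s₆ + s₇))^2
      = m₁ * (Real.cot s₅)^2 + m₂ * (Real.cot (s₅ + s₄ + s₃))^2
      + m₂ * (Real.cot (s₅ + s₄ + s₃ + s₂ + s₁ + s₈ + s₇))^2 := by
    linear_combination hCSC1 - hCSC6
      + m₁ * (Real.cot (s₅ + s₄ + s₃ + s₂ + s₁) + Real.cot (s₁ + s₂ + s₃ + s₄ + s₅)) * hC16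
  have o1bd := o1cd.trans o1bc
  have o6bd := o6cd.trans o6bc
  have sd16 : Real.cot s₅ ≤ Real.cot s₁ := cot_le_cot hs₁ h15 (by linarith)
  obtain ⟨hy16, hz16⟩ := mom_top m₁ m₂ m₂ _ _ _ _ _ _ hm₁ hm₂ hm₂
    o1ab o1bd o6ab o6bd e1_16 e2_16 sd16
  have F5 : s₄ + s₅ ≤ s₁ + s₂ := by
    have := angle_le (x := s₅ + s₄ + s₃) (y := s₁ + s₂ + s₃)
      (by linarith) (by linarith) (by linarith) hy16
    linarith
  have F6 : s₆ ≤ s₈ := by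
    have := angle_le (x := s₁ + s₂ + s₃ + s₄ + s₅ + s₆ + s₇)
      (y := s₅ + s₄ + s₃ + s₂ + s₁ + s₈ + s₇)
      (by linarith) (by linarith) (by linarith) hz16
    linarith
  -- Step 4 : s₁ = s₃
  have F7 : s₁ = s₃ := by linarith
  -- Step 5 : B-pair (E1,E4) with reversed seed  ⇒  s₈ ≤ s₄
  have sd41 : Real.cot s₁ ≤ Real.cot s₃ := le_of_eq (by rw [F7])
  obtain ⟨hy41, hz41⟩ := mom_top m₁ m₁ m₂ _ _ _ _ _ _ hm₁ hm₁ hm₂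
    o4ac o4cd o1ac o1cd e1_14.symm e2_14.symm sd41
  have F9 : s₈ ≤ s₄ := by
    have := angle_le (x := s₃ + s₂ + s₁ + s₈ + s₇ + s₆ + s₅)
      (y := s₁ + s₂ + s₃ + s₄ + s₅ + s₆ + s₇)
      (by linarith) (by linarith) (by linarith) hz41
    linarith
  have F10 : s₄ = s₈ := le_antisymm F4 F9
  -- Step 7 : C-pair (E2,E5), seed s₁ ≤ s₅  ⇒  s₄ ≤ s₂, hence s₂ = s₄ = s₈
  have hC25 : Real.cot (s₅ + s₆ + s₇ + s₈ + s₁) = Real.cot (s₁ + s₈ + s₇ + s₆ + s₅) :=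
    congrArg Real.cot (by ring)
  have e1_25 : m₁ * Real.cot s₁ + m₂ * Real.cot (s₁ + s₈ + s₇)
      + m₂ * Real.cot (s₁ + s₈ + s₇ + s₆ + s₅ + s₄ + s₃)
      = m₁ * Real.cot s₅ + m₂ * Real.cot (s₅ + s₆ + s₇)
      + m₂ * Real.cot (s₅ + s₆ + s₇ + s₈ + s₁ + s₂ + s₃) := by
    linear_combination hCMC2 - hCMC5 + m₁ * hC25
  have e2_25 : m₁ * (Real.cot s₁)^2 + m₂ * (Real.cot (s₁ + s₈ + s₇))^2
      + m₂ * (Real.cot (s₁ + s₈ + s₇ + s₆ + s₅ + s₄ + s₃))^2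
      = m₁ * (Real.cot s₅)^2 + m₂ * (Real.cot (s₅ + s₆ + s₇))^2
      + m₂ * (Real.cot (s₅ + s₆ + s₇ + s₈ + s₁ + s₂ + s₃))^2 := by
    linear_combination hCSC2 - hCSC5
      + m₁ * (Real.cot (s₅ + s₆ + s₇ + s₈ + s₁) + Real.cot (s₁ + s₈ + s₇ + s₆ + s₅)) * hC25
  have o2bd := o2cd.trans o2bc
  have o5bd := o5cd.trans o5bc
  obtain ⟨hy25, hz25⟩ := mom_top m₁ m₂ m₂ _ _ _ _ _ _ hm₁ hm₂ hm₂
    o2ab o2bd o5ab o5bd e1_25 e2_25 sd16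
  have F14 : s₄ ≤ s₂ := by
    have := angle_le (x := s₁ + s₈ + s₇ + s₆ + s₅ + s₄ + s₃)
      (y := s₅ + s₆ + s₇ + s₈ + s₁ + s₂ + s₃)
      (by linarith) (by linarith) (by linarith) hz25
    linarith
  have F15 : s₂ = s₄ := by linarith
  -- Step 8 : A-pair (E6,E5), seed on middle (C) from F1  ⇒  s₄ ≤ s₆, hence s₆ = s₈
  have e1_65 : m₂ * Real.cot (s₅ + s₄ + s₃) + m₁ * Real.cot (s₅ + s₄ + s₃ + s₂ + s₁)
      + m₂ * Real.cot (s₅ + s₄ + s₃ + s₂ + s₁ + s₈ + s₇)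
      = m₂ * Real.cot (s₅ + s₆ + s₇) + m₁ * Real.cot (s₅ + s₆ + s₇ + s₈ + s₁)
      + m₂ * Real.cot (s₅ + s₆ + s₇ + s₈ + s₁ + s₂ + s₃) := by
    linear_combination hCMC6 - hCMC5
  have e2_65 : m₂ * (Real.cot (s₅ + s₄ + s₃))^2 + m₁ * (Real.cot (s₅ + s₄ + s₃ + s₂ + s₁))^2
      + m₂ * (Real.cot (s₅ + s₄ + s₃ + s₂ + s₁ + s₈ + s₇))^2
      = m₂ * (Real.cot (s₅ + s₆ + s₇))^2 + m₁ * (Real.cot (s₅ + s₆ + s₇ + s₈ + s₁))^2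
      + m₂ * (Real.cot (s₅ + s₆ + s₇ + s₈ + s₁ + s₂ + s₃))^2 := by
    linear_combination hCSC6 - hCSC5
  have sd65 : Real.cot (s₅ + s₄ + s₃ + s₂ + s₁) ≤ Real.cot (s₅ + s₆ + s₇ + s₈ + s₁) :=
    cot_le_cot (by linarith) (by linarith) (by linarith)
  obtain ⟨hx65, hz65⟩ := mom_mid m₂ m₁ m₂ _ _ _ _ _ _ hm₂ hm₁ hm₂
    o6bc o6cd o5bc o5cd e1_65 e2_65 sd65
  have F16 : s₄ ≤ s₆ := by
    have := angle_le (x := s₅ + s₄ + s₃ + s₂ + s₁ + s₈ + s₇)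
      (y := s₅ + s₆ + s₇ + s₈ + s₁ + s₂ + s₃)
      (by linarith) (by linarith) (by linarith) hz65
    linarith
  have F17 : s₆ = s₈ := by linarith
  -- Step 9 : B-pair (E2,E7), seed D₂ = D₇ (since s₂ = s₆)  ⇒  s₁ = s₇
  have hB27 : Real.cot (s₇ + s₈ + s₁) = Real.cot (s₁ + s₈ + s₇) :=
    congrArg Real.cot (by ring)
  have hD27 : Real.cot (s₁ + s₈ + s₇ + s₆ + s₅ + s₄ + s₃)
      = Real.cot (s₇ + s₈ + s₁ + s₂ + s₃ + s₄ + s₅) :=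
    congrArg Real.cot (by linarith)
  have e1_27 : m₁ * Real.cot s₁ + m₁ * Real.cot (s₁ + s₈ + s₇ + s₆ + s₅)
      + m₂ * Real.cot (s₁ + s₈ + s₇ + s₆ + s₅ + s₄ + s₃)
      = m₁ * Real.cot s₇ + m₁ * Real.cot (s₇ + s₈ + s₁ + s₂ + s₃)
      + m₂ * Real.cot (s₇ + s₈ + s₁ + s₂ + s₃ + s₄ + s₅) := by
    linear_combination hCMC2 - hCMC7 + m₂ * hB27
  have e2_27 : m₁ * (Real.cot s₁)^2 + m₁ * (Real.cot (s₁ + s₈ + s₇ + s₆ + s₅))^2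
      + m₂ * (Real.cot (s₁ + s₈ + s₇ + s₆ + s₅ + s₄ + s₃))^2
      = m₁ * (Real.cot s₇)^2 + m₁ * (Real.cot (s₇ + s₈ + s₁ + s₂ + s₃))^2
      + m₂ * (Real.cot (s₇ + s₈ + s₁ + s₂ + s₃ + s₄ + s₅))^2 := by
    linear_combination hCSC2 - hCSC7
      + m₂ * (Real.cot (s₇ + s₈ + s₁) + Real.cot (s₁ + s₈ + s₇)) * hB27
  have o2ac := o2bc.trans o2ab
  have o7ac := o7bc.trans o7ab
  obtain ⟨hx27, _⟩ := mom_bot m₁ m₁ m₂ _ _ _ _ _ _ hm₁ hm₁ hm₂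
    o2ac o2cd o7ac o7cd e1_27 e2_27 (le_of_eq hD27.symm)
  obtain ⟨hx72, _⟩ := mom_bot m₁ m₁ m₂ _ _ _ _ _ _ hm₁ hm₁ hm₂
    o7ac o7cd o2ac o2cd e1_27.symm e2_27.symm (le_of_eq hD27)
  have F18 : s₁ = s₇ := by
    have h1 : s₁ ≤ s₇ := angle_le hs₁ (by linarith) hs₇ hx27
    have h2 : s₇ ≤ s₁ := angle_le hs₇ (by linarith) hs₁ hx72
    linarith
  -- Step 10 : B-pair (E5,E8), seed D₅ = D₈ (since s₄ = s₈)  ⇒  s₅ = s₇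
  have hB58 : Real.cot (s₇ + s₆ + s₅) = Real.cot (s₅ + s₆ + s₇) :=
    congrArg Real.cot (by ring)
  have hD58 : Real.cot (s₅ + s₆ + s₇ + s₈ + s₁ + s₂ + s₃)
      = Real.cot (s₇ + s₆ + s₅ + s₄ + s₃ + s₂ + s₁) :=
    congrArg Real.cot (by linarith)
  have e1_58 : m₁ * Real.cot s₅ + m₁ * Real.cot (s₅ + s₆ + s₇ + s₈ + s₁)
      + m₂ * Real.cot (s₅ + s₆ + s₇ + s₈ + s₁ + s₂ + s₃)
      = m₁ * Real.cot s₇ + m₁ * Real.cot (s₇ + s₆ + s₅ + s₄ + s₃)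
      + m₂ * Real.cot (s₇ + s₆ + s₅ + s₄ + s₃ + s₂ + s₁) := by
    linear_combination hCMC5 - hCMC8 + m₂ * hB58
  have e2_58 : m₁ * (Real.cot s₅)^2 + m₁ * (Real.cot (s₅ + s₆ + s₇ + s₈ + s₁))^2
      + m₂ * (Real.cot (s₅ + s₆ + s₇ + s₈ + s₁ + s₂ + s₃))^2
      = m₁ * (Real.cot s₇)^2 + m₁ * (Real.cot (s₇ + s₆ + s₅ + s₄ + s₃))^2
      + m₂ * (Real.cot (s₇ + s₆ + s₅ + s₄ + s₃ + s₂ + s₁))^2 := by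
    linear_combination hCSC5 - hCSC8
      + m₂ * (Real.cot (s₇ + s₆ + s₅) + Real.cot (s₅ + s₆ + s₇)) * hB58
  have o5ac := o5bc.trans o5ab
  have o8ac := o8bc.trans o8ab
  obtain ⟨hx58, _⟩ := mom_bot m₁ m₁ m₂ _ _ _ _ _ _ hm₁ hm₁ hm₂
    o5ac o5cd o8ac o8cd e1_58 e2_58 (le_of_eq hD58.symm)
  obtain ⟨hx85, _⟩ := mom_bot m₁ m₁ m₂ _ _ _ _ _ _ hm₁ hm₁ hm₂
    o8ac o8cd o5ac o5cd e1_58.symm e2_58.symm (le_of_eq hD58)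
  have F19 : s₅ = s₇ := by
    have h1 : s₅ ≤ s₇ := angle_le hs₅ (by linarith) hs₇ hx58
    have h2 : s₇ ≤ s₅ := angle_le hs₇ (by linarith) hs₅ hx85
    linarith
  refine ⟨by linarith, by linarith, by linarith⟩
end

section
/- Let θ₁ be real and α, β, γ > 0 with α+β+γ < π; set δ = π−(α+β+γ), and define unit complex numbers z₂ = exp(2iθ₁), z₄ = exp(2i(θ₁+α)), z₆ = exp(2i(θ₁+α+β)), z₈ = exp(2i(θ₁+α+β+γ)). If (z₂−z₄)(z₆−z₈) = −(z₂−z₈)(z₆−z₄) (i.e. the cross ratio [z₂,z₆;z₄,z₈] equals −1), then 2(1 + exp(2i(α+γ))) − exp(2iα) − exp(2iγ) − exp(−2iδ) − exp(−2iβ) = 0. [Lemma 6.2 of the paper.] -/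
open Real Complex

/-- Lemma 6.2: the relation among the half-arc increments of the octagon cut out
by a Dupin hypersurface with `g = 4` whose Lie curvature equals `−1`. -/
theorem cross_ratio_relation_g4
    (θ₁ α β γ δ : ℝ)
    (hα : 0 < α) (hβ : 0 < β) (hγ : 0 < γ)
    (habg : α + β + γ < π)
    (hδ : δ = π - (α + β + γ))
    (z₂ z₄ z₆ z₈ : ℂ)
    (hz₂ : z₂ = Complex.exp (2 * Complex.I * (θ₁ : ℂ)))
    (hz₄ : z₄ = Complex.exp (2 * Complex.I * ((θ₁ + α : ℝ) : ℂ)))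
    (hz₆ : z₆ = Complex.exp (2 * Complex.I * ((θ₁ + α + β : ℝ) : ℂ)))
    (hz₈ : z₈ = Complex.exp (2 * Complex.I * ((θ₁ + α + β + γ : ℝ) : ℂ)))
    (hcr : (z₂ - z₄) * (z₆ - z₈) = -((z₂ - z₈) * (z₆ - z₄))) :
    2 * (1 + Complex.exp (2 * Complex.I * ((α + γ : ℝ) : ℂ)))
      - Complex.exp (2 * Complex.I * (α : ℂ))
      - Complex.exp (2 * Complex.I * (γ : ℂ))
      - Complex.exp (-(2 * Complex.I * (δ : ℂ)))
      - Complex.exp (-(2 * Complex.I * (β : ℂ))) = 0 := by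
  set t := Complex.exp (2 * Complex.I * (θ₁ : ℂ)) with ht
  set a := Complex.exp (2 * Complex.I * (α : ℂ)) with ha
  set b := Complex.exp (2 * Complex.I * (β : ℂ)) with hb
  set c := Complex.exp (2 * Complex.I * (γ : ℂ)) with hc
  have ht0 : t ≠ 0 := Complex.exp_ne_zero _
  have ha0 : a ≠ 0 := Complex.exp_ne_zero _
  have hb0 : b ≠ 0 := Complex.exp_ne_zero _
  have e4 : z₄ = t * a := by
    rw [hz₄, ht, ha, ← Complex.exp_add]; congr 1; push_cast; ring
  have e6 : z₆ = t * a * b := by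
    rw [hz₆, ht, ha, hb, ← Complex.exp_add, ← Complex.exp_add]; congr 1; push_cast; ring
  have e8 : z₈ = t * a * b * c := by
    rw [hz₈, ht, ha, hb, hc, ← Complex.exp_add, ← Complex.exp_add, ← Complex.exp_add]
    congr 1; push_cast; ring
  have eac : Complex.exp (2 * Complex.I * ((α + γ : ℝ) : ℂ)) = a * c := by
    rw [ha, hc, ← Complex.exp_add]; congr 1; push_cast; ring
  have ebinv : Complex.exp (-(2 * Complex.I * (β : ℂ))) = b⁻¹ := by
    rw [hb, ← Complex.exp_neg]
  have edelta : Complex.exp (-(2 * Complex.I * (δ : ℂ))) = a * b * c := by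
    have : (-(2 * Complex.I * (δ : ℂ))) =
        2 * Complex.I * (α : ℂ) + 2 * Complex.I * (β : ℂ) + 2 * Complex.I * (γ : ℂ)
          + (-(2 * (π : ℂ) * Complex.I)) := by
      rw [hδ]; push_cast; ring
    rw [this, Complex.exp_add, Complex.exp_add, Complex.exp_add, Complex.exp_neg,
      Complex.exp_two_pi_mul_I, ← ha, ← hb, ← hc]
    simp
  rw [hz₂, e4, e6, e8] at hcr
  have key : t ^ 2 * a * (b * (1 - a) * (1 - c) - (1 - a * b * c) * (1 - b)) = 0 := by
    linear_combination hcr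
  have key2 : b * (1 - a) * (1 - c) - (1 - a * b * c) * (1 - b) = 0 := by
    rcases mul_eq_zero.mp key with h | h
    · exact absurd h (mul_ne_zero (pow_ne_zero 2 ht0) ha0)
    · exact h
  rw [eac, ebinv, edelta]
  field_simp
  linear_combination key2
end

section
/- Let α, β, γ, δ > 0 be real numbers with α+β+γ+δ = π and α+β = π/2. If 2(1 + exp(2i(α+γ))) − exp(2iα) − exp(2iγ) − exp(−2iδ) − exp(−2iβ) = 0, then α+γ = π/2, and consequently β = γ and δ = α. [The computation of Section 6.2 of the paper deriving equation (6.16) from the normalized cross-ratio relation.] -/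
open Real Complex

/-- The computation of Section 6.2: the normalized cross-ratio relation forces
`α + γ = π/2`, hence `β = γ` and `δ = α`. -/
theorem normalized_octagon_angles
    (α β γ δ : ℝ)
    (hα : 0 < α) (hβ : 0 < β) (hγ : 0 < γ) (hδ : 0 < δ)
    (hsum : α + β + γ + δ = π)
    (hab : α + β = π / 2)
    (heq : 2 * (1 + Complex.exp (2 * Complex.I * ((α + γ : ℝ) : ℂ)))
      - Complex.exp (2 * Complex.I * (α : ℂ))
      - Complex.exp (2 * Complex.I * (γ : ℂ))
      - Complex.exp (-(2 * Complex.I * (δ : ℂ)))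
      - Complex.exp (-(2 * Complex.I * (β : ℂ))) = 0) :
    α + γ = π / 2 ∧ β = γ ∧ δ = α := by
  have hβ' : β = π / 2 - α := by linarith
  have hδ' : δ = π / 2 - γ := by linarith
  have hm : Complex.exp (-(π * Complex.I)) = -1 := by
    rw [Complex.exp_neg, Complex.exp_pi_mul_I]; norm_num
  have key : ∀ x : ℝ, Complex.exp (-(2 * Complex.I * ((π / 2 - x : ℝ) : ℂ)))
      = -Complex.exp (2 * Complex.I * (x : ℂ)) := by
    intro x
    have harg : -(2 * Complex.I * ((π / 2 - x : ℝ) : ℂ))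
        = 2 * Complex.I * (x : ℂ) + -(π * Complex.I) := by push_cast; ring
    rw [harg, Complex.exp_add, hm]; ring
  rw [hβ', hδ', key, key] at heq
  have hE : Complex.exp (2 * Complex.I * ((α + γ : ℝ) : ℂ)) = -1 := by
    linear_combination heq / 2
  have harg : 2 * Complex.I * ((α + γ : ℝ) : ℂ) = ((2 * (α + γ) : ℝ) : ℂ) * Complex.I := by
    push_cast; ring
  rw [harg] at hE
  have hcos : Real.cos (2 * (α + γ)) = -1 := by
    have h := congrArg Complex.re hE
    rwa [Complex.exp_ofReal_mul_I_re] at h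
  obtain ⟨k, hk⟩ := Real.cos_eq_neg_one_iff.mp hcos
  have hπ := Real.pi_pos
  have hlt : α + γ < π := by linarith
  have hk0 : k = 0 := by
    have h1 : (k : ℝ) < 1 := by nlinarith
    have h2 : (-1 : ℝ) < k := by nlinarith
    have h1' : k < 1 := by exact_mod_cast h1
    have h2' : -1 < k := by exact_mod_cast h2
    omega
  rw [hk0] at hk
  have hac : α + γ = π / 2 := by push_cast at hk; linarith
  exact ⟨hac, by linarith, by linarith⟩
end

section
/- Let λ > μ > ν > ρ > σ > τ be real numbers. For c ∈ {ν, ρ, τ} define v_c = (c−λ)/((λ−σ)(c−σ)) and w_c = (σ−μ)/((c−σ)(c−μ)). Then each w_c is nonzero and 1 − v_ν/w_ν − v_ρ/w_ρ − v_τ/w_τ > 0. Consequently, if real numbers d₅, d_ν, d_ρ, d_τ satisfy v_c·d₅ + w_c·d_c = 0 for each c ∈ {ν, ρ, τ} and d₅ + d_ν + d_ρ + d_τ = 0, then d₅ = d_ν = d_ρ = d_τ = 0. [Lemma 7.1 of the paper: at a suitable critical point of a closed CMC Dupin hypersurface with g = 6 and constant Lie curvatures, the derivatives e₁(λ_i)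 all vanish.] -/
/-!
Each row `v_c d₅ + w_c d_c = 0` expresses `d_c = -(v_c / w_c) d₅`, so the sum condition becomes
`d₅ (1 - Σ v_c / w_c) = 0`. After cancelling `c - σ`, the ratio `v_c / w_c` is
`(c - λ)(c - μ) / ((λ - σ)(σ - μ))`, which is negative for every `c < μ` since `σ < μ < λ`;
hence `1 - Σ v_c / w_c > 1` and everything vanishes.
-/

theorem eq_zero_of_rows_of_sum_eq_zero {K ι : Type*} [Field K] [Fintype ι] {v w d : ι → K}
    {d₀ : K} (hw : ∀ i, w i ≠ 0) (hdet : 1 - ∑ i, v i / w i ≠ 0)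
    (hrow : ∀ i, v i * d₀ + w i * d i = 0) (hsum : d₀ + ∑ i, d i = 0) :
    d₀ = 0 ∧ ∀ i, d i = 0 := by
  have hd : ∀ i, d i = -(v i / w i) * d₀ := fun i => by
    have := hw i
    field_simp
    linear_combination hrow i
  have hd₀ : d₀ = 0 := by
    have : d₀ * (1 - ∑ i, v i / w i) = 0 := calc
      _ = d₀ + ∑ i, -(v i / w i) * d₀ := by
        rw [← Finset.sum_mul, Finset.sum_neg_distrib]; ring
      _ = d₀ + ∑ i, d i := by simp only [hd]
      _ = 0 := hsum
    exact (mul_eq_zero.mp this).resolve_right hdet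
  exact ⟨hd₀, fun i => by rw [hd i, hd₀, mul_zero]⟩

theorem lie_weight_ne_zero {mu sg c : ℝ} (hmu : sg ≠ mu) (hcs : c ≠ sg) (hcm : c ≠ mu) :
    (sg - mu) / ((c - sg) * (c - mu)) ≠ 0 :=
  div_ne_zero (sub_ne_zero.mpr hmu) (mul_ne_zero (sub_ne_zero.mpr hcs) (sub_ne_zero.mpr hcm))

theorem lie_coeff_div_weight {l mu sg c : ℝ} (hcs : c ≠ sg) :
    (c - l) / ((l - sg) * (c - sg)) / ((sg - mu) / ((c - sg) * (c - mu)))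
      = (c - l) * (c - mu) / ((l - sg) * (sg - mu)) := by
  rw [div_div_eq_mul_div, div_mul_eq_mul_div, div_div, mul_right_comm (l - sg),
    mul_comm (c - sg), ← mul_assoc, mul_div_mul_right _ _ (sub_ne_zero.mpr hcs)]

theorem lie_coeff_div_weight_neg {l mu sg c : ℝ} (hml : mu < l) (hsm : sg < mu) (hcs : c ≠ sg)
    (hcm : c < mu) :
    (c - l) / ((l - sg) * (c - sg)) / ((sg - mu) / ((c - sg) * (c - mu))) < 0 := by
  rw [lie_coeff_div_weight hcs]
  exact div_neg_of_pos_of_neg (mul_pos_of_neg_of_neg (by linarith) (by linarith))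
    (mul_neg_of_pos_of_neg (by linarith) (by linarith))

/-- Lemma 7.1: at a suitable critical point of a closed CMC Dupin hypersurface
with `g = 6` and constant Lie curvatures, the derivatives `e₁(λᵢ)` all vanish.
Here `l > mu > nu > rho > sg > ta` are the six principal curvatures, and for
`c ∈ {nu, rho, ta}` we set `v c = (c − l)/((l − sg)(c − sg))` and
`w c = (sg − mu)/((c − sg)(c − mu))`. -/
theorem g6_derivatives_vanish
    (l mu nu rho sg ta : ℝ)
    (h1 : l > mu) (h2 : mu > nu) (h3 : nu > rho) (h4 : rho > sg) (h5 : sg > ta) :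
    ((sg - mu) / ((nu - sg) * (nu - mu)) ≠ 0) ∧
    ((sg - mu) / ((rho - sg) * (rho - mu)) ≠ 0) ∧
    ((sg - mu) / ((ta - sg) * (ta - mu)) ≠ 0) ∧
    (1 - ((nu - l) / ((l - sg) * (nu - sg))) / ((sg - mu) / ((nu - sg) * (nu - mu)))
       - ((rho - l) / ((l - sg) * (rho - sg))) / ((sg - mu) / ((rho - sg) * (rho - mu)))
       - ((ta - l) / ((l - sg) * (ta - sg))) / ((sg - mu) / ((ta - sg) * (ta - mu)))
       > 0) ∧
    (∀ d₅ dnu drho dta : ℝ,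
      ((nu - l) / ((l - sg) * (nu - sg))) * d₅
        + ((sg - mu) / ((nu - sg) * (nu - mu))) * dnu = 0 →
      ((rho - l) / ((l - sg) * (rho - sg))) * d₅
        + ((sg - mu) / ((rho - sg) * (rho - mu))) * drho = 0 →
      ((ta - l) / ((l - sg) * (ta - sg))) * d₅
        + ((sg - mu) / ((ta - sg) * (ta - mu))) * dta = 0 →
      d₅ + dnu + drho + dta = 0 →
      d₅ = 0 ∧ dnu = 0 ∧ drho = 0 ∧ dta = 0) := by
  have hsm : sg < mu := by linarith
  have hw_nu := lie_weight_ne_zero (c := nu) hsm.ne (by linarith) (by linarith)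
  have hw_rho := lie_weight_ne_zero (c := rho) hsm.ne (by linarith) (by linarith)
  have hw_ta := lie_weight_ne_zero (c := ta) hsm.ne (by linarith) (by linarith)
  have hdet : 1 - (nu - l) / ((l - sg) * (nu - sg)) / ((sg - mu) / ((nu - sg) * (nu - mu)))
      - (rho - l) / ((l - sg) * (rho - sg)) / ((sg - mu) / ((rho - sg) * (rho - mu)))
      - (ta - l) / ((l - sg) * (ta - sg)) / ((sg - mu) / ((ta - sg) * (ta - mu))) > 0 := by
    linarith [lie_coeff_div_weight_neg h1 hsm (c := nu) (by linarith) h2,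
      lie_coeff_div_weight_neg h1 hsm (c := rho) (by linarith) (by linarith),
      lie_coeff_div_weight_neg h1 hsm (c := ta) (by linarith) (by linarith)]
  refine ⟨hw_nu, hw_rho, hw_ta, hdet, fun d₅ dnu drho dta g_nu g_rho g_ta hsum => ?_⟩
  obtain ⟨hd₅, hd⟩ := eq_zero_of_rows_of_sum_eq_zero (d₀ := d₅) (d := ![dnu, drho, dta])
    (v := ![(nu - l) / ((l - sg) * (nu - sg)), (rho - l) / ((l - sg) * (rho - sg)),
      (ta - l) / ((l - sg) * (ta - sg))])
    (w := ![(sg - mu) / ((nu - sg) * (nu - mu)), (sg - mu) / ((rho - sg) * (rho - mu)),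
      (sg - mu) / ((ta - sg) * (ta - mu))])
    (fun i => by fin_cases i <;> assumption) (by simpa [Fin.sum_univ_three, sub_sub] using hdet.ne')
    (fun i => by fin_cases i <;> assumption) (by simpa [Fin.sum_univ_three, add_assoc] using hsum)
  exact ⟨hd₅, hd 0, hd 1, hd 2⟩
end

section
/- Let λ > μ > ν > ρ > σ > τ be real numbers. Then it is impossible that both (λ−μ)(σ−μ) + (λ−ν)(σ−ν) + (λ−ρ)(σ−ρ) + (λ−τ)(σ−τ) = 0 and μ(λ−μ)(σ−μ) + ν(λ−ν)(σ−ν) + ρ(λ−ρ)(σ−ρ) + τ(λ−τ)(σ−τ) = 0 hold simultaneously. [The contradiction argument concluding Section 7.2 of the paper, which proves that the derivatives e₅(λ_i) of the principal curvatures of a closed CMC Dupin hypersurface with g = 6 and constant Lie curvatures vanish at the chosen critical point (Proposition 7.1).] -/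
/-- The contradiction argument concluding Section 7.2 (Proposition 7.1): the two
displayed relations cannot hold simultaneously for six distinct ordered reals. -/
theorem g6_e5_contradiction
    (l mu nu rho sg ta : ℝ)
    (h1 : l > mu) (h2 : mu > nu) (h3 : nu > rho) (h4 : rho > sg) (h5 : sg > ta) :
    ¬ ((l - mu) * (sg - mu) + (l - nu) * (sg - nu) + (l - rho) * (sg - rho)
        + (l - ta) * (sg - ta) = 0 ∧
       mu * (l - mu) * (sg - mu) + nu * (l - nu) * (sg - nu)
        + rho * (l - rho) * (sg - rho) + ta * (l - ta) * (sg - ta) = 0) := by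
  rintro ⟨hA, hB⟩
  have key : rho * ((l - mu) * (sg - mu) + (l - nu) * (sg - nu) + (l - rho) * (sg - rho)
        + (l - ta) * (sg - ta)) = 0 := by rw [hA]; ring
  nlinarith [key, mul_pos (sub_pos.2 h1) (show (0:ℝ) < mu - sg by linarith),
    mul_pos (show (0:ℝ) < l - nu by linarith) (show (0:ℝ) < nu - sg by linarith),
    mul_pos (show (0:ℝ) < l - rho by linarith) (show (0:ℝ) < rho - sg by linarith),
    mul_pos (show (0:ℝ) < l - ta by linarith) (show (0:ℝ) < sg - ta by linarith),
    mul_pos (show (0:ℝ) < mu - rho by linarith) (mul_pos (sub_pos.2 h1) (show (0:ℝ) < mu - sg by linarith)),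
    mul_pos (show (0:ℝ) < nu - rho by linarith) (mul_pos (show (0:ℝ) < l - nu by linarith) (show (0:ℝ) < nu - sg by linarith)),
    mul_pos (show (0:ℝ) < rho - ta by linarith) (mul_pos (show (0:ℝ) < l - ta by linarith) (show (0:ℝ) < sg - ta by linarith))]
end

section
/- Let α, β, γ, δ, ζ, η > 0 with α+β+γ = π/2 and δ+ζ+η = π/2, set w₁ = exp(2iα), w₂ = exp(2iβ), w₃ = exp(2iγ), w₄ = exp(2iδ), w₅ = exp(2iζ), w₆ = exp(2iη), and let z₂ be a complex number of modulus one with z₄ = w₁z₂, z₆ = w₂z₄, z₈ = w₃z₆, z₁₀ = w₄z₈, z₁₂ = w₅z₁₀. Then all denominators below are nonzero and the three cross ratios satisfy: ((z₂−z₄)(z₆−z₁₀))/((z₂−z₁₀)(z₆−z₄)) = ((1−w₁)(1−w₃w₄))/((1+w₄)(1+w₁w₃)); ((z₆−z₈)(z₁₀−z₂))/((z₆−z₂)(z₁₀−z₈)) = ((1−w₃)(1−w₅w₆))/((1+w₃)(1+w₅w₆)); ((z₁₂−z₂)(z₄−z₈))/((z₁₂−z₈)(z₄−z₂)) = ((1−w₆)(1−w₂w₃))/((1+w₆)(1+w₂w₃)).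 [Lemma 7.5 of the paper, computing the Lie curvatures Ψ_ν at the points p¹, p⁵, p¹¹ of the dodecagon.] -/
open Real Complex

/-!
Since `α + β + γ = π / 2`, the first three arcs make a half-turn, `w₁ w₂ w₃ = -1`, so `z₈ = -z₂`;
likewise `w₄ w₅ w₆ = -1`. Every point is then `±z₂` times a monomial in the `wᵢ`, the factor `z₂²`
cancels from each cross ratio, and the identities become polynomial identities modulo
`w₁ w₂ w₃ = -1` and `w₄ w₅ w₆ = -1`. The denominators are nonzero because `exp (2 i θ)` lies in
the open upper half-plane for `0 < θ < π / 2`, so it is neither `1` nor `-1`.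
-/

lemma im_exp_two_mul_I_pos {θ : ℝ} (h0 : 0 < θ) (h1 : θ < π / 2) :
    0 < (exp (2 * I * θ)).im := by
  rw [show 2 * I * θ = ((2 * θ : ℝ) : ℂ) * I by push_cast; ring, exp_ofReal_mul_I_im]
  exact Real.sin_pos_of_pos_of_lt_pi (by linarith) (by linarith)

lemma exp_two_mul_I_ne_one {θ : ℝ} (h0 : 0 < θ) (h1 : θ < π / 2) : exp (2 * I * θ) ≠ 1 :=
  fun h ↦ (im_exp_two_mul_I_pos h0 h1).ne' (by simp [h])

lemma exp_two_mul_I_ne_neg_one {θ : ℝ} (h0 : 0 < θ) (h1 : θ < π / 2) : exp (2 * I * θ) ≠ -1 :=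
  fun h ↦ (im_exp_two_mul_I_pos h0 h1).ne' (by simp [h])

lemma exp_two_mul_I_mul_mul_eq_neg_one {a b c : ℝ} (h : a + b + c = π / 2) :
    exp (2 * I * a) * exp (2 * I * b) * exp (2 * I * c) = -1 := by
  rw [← Complex.exp_add, ← Complex.exp_add, ← exp_pi_mul_I]
  congr 1
  rw [show (π : ℂ) = 2 * (a + b + c) by exact_mod_cast (by linarith : π = 2 * (a + b + c))]
  ring

section Dodecagon

variable {K : Type*} [Field K]

theorem dodecagon_cross_ratio_p₁ {w₁ w₂ w₃ w₄ z₂ z₄ z₆ z₁₀ : K} (hz₂ : z₂ ≠ 0)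
    (h₁₂₃ : w₁ * w₂ * w₃ = -1) (hw₂ : w₂ ≠ 1) (hw₄ : w₄ ≠ -1)
    (hz₄ : z₄ = w₁ * z₂) (hz₆ : z₆ = w₁ * w₂ * z₂) (hz₁₀ : z₁₀ = -(w₄ * z₂)) :
    (z₂ - z₁₀) * (z₆ - z₄) ≠ 0 ∧ (1 + w₄) * (1 + w₁ * w₃) ≠ 0 ∧
      ((z₂ - z₄) * (z₆ - z₁₀)) / ((z₂ - z₁₀) * (z₆ - z₄)) =
        ((1 - w₁) * (1 - w₃ * w₄)) / ((1 + w₄) * (1 + w₁ * w₃)) := by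
  have hw₁ : w₁ ≠ 0 := by rintro rfl; simp at h₁₂₃
  have h₄ : 1 + w₄ ≠ 0 := fun h ↦ hw₄ (by linear_combination h)
  have h₂ : w₂ - 1 ≠ 0 := sub_ne_zero.mpr hw₂
  have hL : (z₂ - z₁₀) * (z₆ - z₄) ≠ 0 := by
    rw [hz₁₀, hz₆, hz₄, show (z₂ - -(w₄ * z₂)) * (w₁ * w₂ * z₂ - w₁ * z₂)
      = z₂ ^ 2 * w₁ * (1 + w₄) * (w₂ - 1) by ring]
    positivity
  have hR : (1 + w₄) * (1 + w₁ * w₃) ≠ 0 :=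
    mul_ne_zero h₄ fun h ↦ hw₂ (by linear_combination w₂ * h - h₁₂₃)
  refine ⟨hL, hR, ?_⟩
  rw [div_eq_div_iff hL hR, hz₄, hz₆, hz₁₀]
  linear_combination z₂ ^ 2 * (1 - w₁) * (1 + w₄) * (w₁ + w₄) * h₁₂₃

theorem dodecagon_cross_ratio_p₅ {w₁ w₂ w₃ w₄ w₅ w₆ z₂ z₆ z₈ z₁₀ : K} (hz₂ : z₂ ≠ 0)
    (h₁₂₃ : w₁ * w₂ * w₃ = -1) (h₄₅₆ : w₄ * w₅ * w₆ = -1) (hw₃ : w₃ ≠ -1) (hw₄ : w₄ ≠ 1)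
    (hz₆ : z₆ = w₁ * w₂ * z₂) (hz₈ : z₈ = -z₂) (hz₁₀ : z₁₀ = -(w₄ * z₂)) :
    (z₆ - z₂) * (z₁₀ - z₈) ≠ 0 ∧ (1 + w₃) * (1 + w₅ * w₆) ≠ 0 ∧
      ((z₆ - z₈) * (z₁₀ - z₂)) / ((z₆ - z₂) * (z₁₀ - z₈)) =
        ((1 - w₃) * (1 - w₅ * w₆)) / ((1 + w₃) * (1 + w₅ * w₆)) := by
  have h₁₂ : w₁ * w₂ - 1 ≠ 0 := fun h ↦ hw₃ (by linear_combination -w₃ * h + h₁₂₃)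
  have h₄ : 1 - w₄ ≠ 0 := fun h ↦ hw₄ (by linear_combination -h)
  have hL : (z₆ - z₂) * (z₁₀ - z₈) ≠ 0 := by
    rw [hz₆, hz₈, hz₁₀, show (w₁ * w₂ * z₂ - z₂) * (-(w₄ * z₂) - -z₂)
      = z₂ ^ 2 * (w₁ * w₂ - 1) * (1 - w₄) by ring]
    positivity
  have hR : (1 + w₃) * (1 + w₅ * w₆) ≠ 0 :=
    mul_ne_zero (fun h ↦ hw₃ (by linear_combination h))
      fun h ↦ hw₄ (by linear_combination w₄ * h - h₄₅₆)
  refine ⟨hL, hR, ?_⟩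
  -- modulo the two relations, both sides reduce to `-z₂² (w₁ w₂ + w₃) (w₄ + w₅ w₆)`
  rw [div_eq_div_iff hL hR, hz₆, hz₈, hz₁₀]
  linear_combination z₂ ^ 2 * (-2 * (w₁ * w₂ + w₃) * h₄₅₆ - 2 * (w₄ + w₅ * w₆) * h₁₂₃)

theorem dodecagon_cross_ratio_p₁₁ {w₁ w₂ w₃ w₄ w₅ w₆ z₂ z₄ z₈ z₁₂ : K} (hz₂ : z₂ ≠ 0)
    (h₁₂₃ : w₁ * w₂ * w₃ = -1) (h₄₅₆ : w₄ * w₅ * w₆ = -1) (hw₁ : w₁ ≠ 1) (hw₆ : w₆ ≠ -1)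
    (hz₄ : z₄ = w₁ * z₂) (hz₈ : z₈ = -z₂) (hz₁₂ : z₁₂ = -(w₄ * w₅ * z₂)) :
    (z₁₂ - z₈) * (z₄ - z₂) ≠ 0 ∧ (1 + w₆) * (1 + w₂ * w₃) ≠ 0 ∧
      ((z₁₂ - z₂) * (z₄ - z₈)) / ((z₁₂ - z₈) * (z₄ - z₂)) =
        ((1 - w₆) * (1 - w₂ * w₃)) / ((1 + w₆) * (1 + w₂ * w₃)) := by
  have h₄₅ : 1 - w₄ * w₅ ≠ 0 := fun h ↦ hw₆ (by linear_combination w₆ * h + h₄₅₆)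
  have h₁ : w₁ - 1 ≠ 0 := sub_ne_zero.mpr hw₁
  have hL : (z₁₂ - z₈) * (z₄ - z₂) ≠ 0 := by
    rw [hz₁₂, hz₈, hz₄, show (-(w₄ * w₅ * z₂) - -z₂) * (w₁ * z₂ - z₂)
      = z₂ ^ 2 * (1 - w₄ * w₅) * (w₁ - 1) by ring]
    positivity
  have hR : (1 + w₆) * (1 + w₂ * w₃) ≠ 0 :=
    mul_ne_zero (fun h ↦ hw₆ (by linear_combination h))
      fun h ↦ hw₁ (by linear_combination w₁ * h - h₁₂₃)
  refine ⟨hL, hR, ?_⟩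
  -- modulo the two relations, both sides reduce to `-z₂² (w₁ + w₂ w₃) (w₄ w₅ + w₆)`
  rw [div_eq_div_iff hL hR, hz₁₂, hz₈, hz₄]
  linear_combination z₂ ^ 2 * (-2 * (w₄ * w₅ + w₆) * h₁₂₃ - 2 * (w₁ + w₂ * w₃) * h₄₅₆)

end Dodecagon

/-- Lemma 7.5: computation of the Lie curvatures `Ψ_ν` at the points `p¹, p⁵, p¹¹`
of the normalized dodecagon of a Dupin hypersurface with `g = 6`. -/
theorem dodecagon_cross_ratios
    (α β γ δ ζ η : ℝ)
    (hα : 0 < α) (hβ : 0 < β) (hγ : 0 < γ) (hδ : 0 < δ) (hζ : 0 < ζ) (hη : 0 < η)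
    (habc : α + β + γ = π / 2) (hdef : δ + ζ + η = π / 2)
    (w₁ w₂ w₃ w₄ w₅ w₆ : ℂ)
    (hw₁ : w₁ = Complex.exp (2 * Complex.I * (α : ℂ)))
    (hw₂ : w₂ = Complex.exp (2 * Complex.I * (β : ℂ)))
    (hw₃ : w₃ = Complex.exp (2 * Complex.I * (γ : ℂ)))
    (hw₄ : w₄ = Complex.exp (2 * Complex.I * (δ : ℂ)))
    (hw₅ : w₅ = Complex.exp (2 * Complex.I * (ζ : ℂ)))
    (hw₆ : w₆ = Complex.exp (2 * Complex.I * (η : ℂ)))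
    (z₂ z₄ z₆ z₈ z₁₀ z₁₂ : ℂ) (hz₂ : ‖z₂‖ = 1)
    (hz₄ : z₄ = w₁ * z₂) (hz₆ : z₆ = w₂ * z₄) (hz₈ : z₈ = w₃ * z₆)
    (hz₁₀ : z₁₀ = w₄ * z₈) (hz₁₂ : z₁₂ = w₅ * z₁₀) :
    ((z₂ - z₁₀) * (z₆ - z₄) ≠ 0 ∧ (1 + w₄) * (1 + w₁ * w₃) ≠ 0 ∧
      ((z₂ - z₄) * (z₆ - z₁₀)) / ((z₂ - z₁₀) * (z₆ - z₄)) =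
        ((1 - w₁) * (1 - w₃ * w₄)) / ((1 + w₄) * (1 + w₁ * w₃))) ∧
    ((z₆ - z₂) * (z₁₀ - z₈) ≠ 0 ∧ (1 + w₃) * (1 + w₅ * w₆) ≠ 0 ∧
      ((z₆ - z₈) * (z₁₀ - z₂)) / ((z₆ - z₂) * (z₁₀ - z₈)) =
        ((1 - w₃) * (1 - w₅ * w₆)) / ((1 + w₃) * (1 + w₅ * w₆))) ∧
    ((z₁₂ - z₈) * (z₄ - z₂) ≠ 0 ∧ (1 + w₆) * (1 + w₂ * w₃) ≠ 0 ∧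
      ((z₁₂ - z₂) * (z₄ - z₈)) / ((z₁₂ - z₈) * (z₄ - z₂)) =
        ((1 - w₆) * (1 - w₂ * w₃)) / ((1 + w₆) * (1 + w₂ * w₃))) := by
  have hz : z₂ ≠ 0 := norm_ne_zero_iff.mp (hz₂ ▸ one_ne_zero)
  have h₁₂₃ : w₁ * w₂ * w₃ = -1 := hw₁ ▸ hw₂ ▸ hw₃ ▸ exp_two_mul_I_mul_mul_eq_neg_one habc
  have h₄₅₆ : w₄ * w₅ * w₆ = -1 := hw₄ ▸ hw₅ ▸ hw₆ ▸ exp_two_mul_I_mul_mul_eq_neg_one hdef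
  have h₆ : z₆ = w₁ * w₂ * z₂ := by rw [hz₆, hz₄]; ring
  have h₈ : z₈ = -z₂ := by rw [hz₈, h₆]; linear_combination z₂ * h₁₂₃
  have h₁₀ : z₁₀ = -(w₄ * z₂) := by rw [hz₁₀, h₈]; ring
  have h₁₂ : z₁₂ = -(w₄ * w₅ * z₂) := by rw [hz₁₂, h₁₀]; ring
  refine ⟨dodecagon_cross_ratio_p₁ hz h₁₂₃ ?_ ?_ hz₄ h₆ h₁₀,
    dodecagon_cross_ratio_p₅ hz h₁₂₃ h₄₅₆ ?_ ?_ h₆ h₈ h₁₀,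
    dodecagon_cross_ratio_p₁₁ hz h₁₂₃ h₄₅₆ ?_ ?_ hz₄ h₈ h₁₂⟩
  · exact hw₂ ▸ exp_two_mul_I_ne_one hβ (by linarith)
  · exact hw₄ ▸ exp_two_mul_I_ne_neg_one hδ (by linarith)
  · exact hw₃ ▸ exp_two_mul_I_ne_neg_one hγ (by linarith)
  · exact hw₄ ▸ exp_two_mul_I_ne_one hδ (by linarith)
  · exact hw₁ ▸ exp_two_mul_I_ne_one hα (by linarith)
  · exact hw₆ ▸ exp_two_mul_I_ne_neg_one hη (by linarith)
end
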